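/- arXiv:1109.2688 — 9 statements merged into one kernel-verified Lean document; each statement's English description precedes it below -/
import Mathlib

section
/- Implicit power series theorem (formal counterpart of the Implicit Species Theorem): if every H_i has zero constant coefficient and the Jacobian matrix at the origin J₀ is nilpotent, then the system Y = H(z,Y) admits exactly one solution S = (S_1,…,S_m) consisting of formal power series in z over R with zero constant coefficients; i.e., there is a unique such vector S with S_i = H_i(z, S_1, …, S_m) for all i. -/
/-!
Write `F(S)ᵢ = Hᵢ(z, S)`. If `S ≡ T mod z^(n+1)` and all constant terms vanish, then
`∏ Sⱼ^dⱼ ≡ ∏ Tⱼ^dⱼ mod z^(n + |d|)`, so only the monomials of degree one separate the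
coefficients of `z^(n+1)` in `F S` and `F T`: their difference is `J₀` applied to that of `S` and
`T`. Two solutions therefore differ at the first disagreeing order by a fixed vector of the
nilpotent `J₀`, i.e. not at all. For existence iterate `F` from `0`: once the lower coefficients
have settled, each step multiplies the change in the `n`-th coefficient by `J₀`, so with
`J₀ ^ N = 0` that coefficient is constant from step `N * n` on, and the limit is a solution.
-/

/-- Substitution of a family `s` of one-variable formal power series (each intended to have
zero constant coefficient) into a multivariate formal power series `H` in `k` variables:
the coefficient of `z^n` in `H(s)` is the (finite) sum over all monomials `d` of the
coefficient of `d` in `H` times the coefficient of `z^n` in `∏ j, (s j) ^ (d j)`.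
When every `s j` has zero constant coefficient, only monomials `d` with
`∑ j, d j ≤ n` (in particular `d ≤ (n, …, n)`) can contribute, so this is the usual
well-defined substitution. -/
noncomputable def mvSubst {R : Type*} [CommSemiring R] {k : ℕ}
    (H : MvPowerSeries (Fin k) R) (s : Fin k → PowerSeries R) : PowerSeries R :=
  PowerSeries.mk fun n =>
    ∑ d ∈ Finset.Iic (Finsupp.equivFunOnFinite.symm fun _ : Fin k => n),
      MvPowerSeries.coeff d H * PowerSeries.coeff n (∏ j, (s j) ^ (d j))

open PowerSeries Matrix

section PowDvd

variable {R : Type*} [CommRing R] {x : R} {N : ℕ}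

theorem pow_dvd_mul_sub_mul {a b c d : R} {p q : ℕ} (ha : x ^ p ∣ a) (hd : x ^ q ∣ d)
    (hab : x ^ (N + p) ∣ a - b) (hcd : x ^ (N + q) ∣ c - d) :
    x ^ (N + p + q) ∣ a * c - b * d := by
  rw [show a * c - b * d = a * (c - d) + (a - b) * d by ring]
  refine dvd_add ?_ ?_
  · rw [show N + p + q = p + (N + q) by ring, pow_add]
    exact mul_dvd_mul ha hcd
  · rw [pow_add]
    exact mul_dvd_mul hab hd

theorem pow_dvd_pow_sub_pow {a b : R} (ha : x ∣ a) (hb : x ∣ b) (hab : x ^ (N + 1) ∣ a - b)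
    (k : ℕ) : x ^ (N + k) ∣ a ^ k - b ^ k := by
  induction k with
  | zero => simp
  | succ k ih =>
    rw [pow_succ a, pow_succ b, ← add_assoc]
    exact pow_dvd_mul_sub_mul (pow_dvd_pow_of_dvd ha k) (by rwa [pow_one]) ih hab

theorem pow_dvd_prod_pow_sub_prod_pow {ι : Type*} (s : Finset ι) {a b : ι → R}
    (ha : ∀ j, x ∣ a j) (hb : ∀ j, x ∣ b j) (hab : ∀ j, x ^ (N + 1) ∣ a j - b j)
    (d : ι → ℕ) :
    x ^ (N + ∑ j ∈ s, d j) ∣ ∏ j ∈ s, a j ^ d j - ∏ j ∈ s, b j ^ d j := by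
  classical
  induction s using Finset.induction_on with
  | empty => simp
  | insert j s hj ih =>
    rw [Finset.prod_insert hj, Finset.prod_insert hj, Finset.sum_insert hj, ← add_assoc]
    refine pow_dvd_mul_sub_mul (pow_dvd_pow_of_dvd (ha j) _) ?_
      (pow_dvd_pow_sub_pow (ha j) (hb j) (hab j) _) ih
    rw [← Finset.prod_pow_eq_pow_sum]
    exact Finset.prod_dvd_prod_of_dvd _ _ fun i _ => pow_dvd_pow_of_dvd (hb i) _

end PowDvd

section mvSubst

variable {R : Type*} [CommRing R] {k : ℕ}

theorem coeff_zero_mvSubst (H : MvPowerSeries (Fin k) R) (s : Fin k → R⟦X⟧) :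
    coeff 0 (mvSubst H s) = MvPowerSeries.coeff 0 H := by
  have hc : (Finsupp.equivFunOnFinite.symm fun _ : Fin k => (0 : ℕ)) = 0 := by
    ext; simp
  simp [mvSubst, hc, show Finset.Iic (0 : Fin k →₀ ℕ) = {0} by ext; simp]

theorem coeff_prod_pow_sub_eq_zero {s t : Fin k → R⟦X⟧} {n : ℕ} (hs : ∀ j, X ∣ s j)
    (ht : ∀ j, X ∣ t j) (hst : ∀ j, X ^ (n + 1) ∣ s j - t j) {d : Fin k →₀ ℕ}
    (hd : ∀ j, d ≠ Finsupp.single j 1) :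
    coeff (n + 1) (∏ j, s j ^ d j - ∏ j, t j ^ d j) = 0 := by
  have hdeg : d.sum (fun _ e => e) = ∑ j, d j := Finsupp.sum_fintype d _ fun _ => rfl
  rcases Nat.lt_or_ge (∑ j, d j) 2 with hlt | hge
  · have hzero : ∑ j, d j = 0 := by
      have := mt (Finsupp.sum_eq_one_iff d).1 (by push Not; exact hd)
      omega
    have : ∀ j, d j = 0 := fun j => Finset.sum_eq_zero_iff.1 hzero j (Finset.mem_univ j)
    simp [this]
  · exact X_pow_dvd_iff.1 (pow_dvd_prod_pow_sub_prod_pow _ hs ht hst d) _ (by omega)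

theorem coeff_mvSubst_sub_coeff_mvSubst (H : MvPowerSeries (Fin k) R) {s t : Fin k → R⟦X⟧}
    {n : ℕ} (hs : ∀ j, X ∣ s j) (ht : ∀ j, X ∣ t j) (hst : ∀ j, X ^ (n + 1) ∣ s j - t j) :
    coeff (n + 1) (mvSubst H s) - coeff (n + 1) (mvSubst H t) =
      ∑ j, MvPowerSeries.coeff (Finsupp.single j 1) H *
        (coeff (n + 1) (s j) - coeff (n + 1) (t j)) := by
  classical
  have hsub : Finset.univ.image (Finsupp.single · 1) ⊆
      Finset.Iic (Finsupp.equivFunOnFinite.symm fun _ : Fin k => n + 1) := by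
    intro d hd
    obtain ⟨j, -, rfl⟩ := Finset.mem_image.1 hd
    rw [Finset.mem_Iic, Finsupp.le_def]
    intro i
    simp only [Finsupp.equivFunOnFinite_symm_apply_apply, Finsupp.single_apply]
    split <;> omega
  simp only [mvSubst, coeff_mk, ← Finset.sum_sub_distrib, ← mul_sub, ← map_sub]
  rw [← Finset.sum_subset hsub, Finset.sum_image]
  · refine Finset.sum_congr rfl fun j _ => ?_
    simp [Finsupp.single_apply, pow_ite]
  · exact fun i _ j _ hij => (Finsupp.single_left_inj one_ne_zero).1 hij
  · intro d _ hd
    rw [coeff_prod_pow_sub_eq_zero hs ht hst fun j hj => hd (by simp [hj]), mul_zero]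

end mvSubst

section Contact

variable {R ι : Type*} [CommRing R]

noncomputable def coeffVec (n : ℕ) (S : ι → R⟦X⟧) : ι → R := fun j => coeff n (S j)

@[simp]
theorem coeffVec_apply (n : ℕ) (S : ι → R⟦X⟧) (j : ι) : coeffVec n S j = coeff n (S j) := rfl

theorem coeffVec_zero_eq_zero {S : ι → R⟦X⟧} (hS : ∀ j, constantCoeff (S j) = 0) :
    coeffVec 0 S = 0 := by
  ext j
  simp [hS]

def EqModXPow (N : ℕ) (S T : ι → R⟦X⟧) : Prop :=
  ∀ i < N, coeffVec i S = coeffVec i T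

namespace EqModXPow

variable {N : ℕ} {S T U : ι → R⟦X⟧}

theorem zero : EqModXPow 0 S T := fun _ hi => absurd hi (Nat.not_lt_zero _)

theorem symm (h : EqModXPow N S T) : EqModXPow N T S := fun i hi => (h i hi).symm

theorem trans (h : EqModXPow N S T) (h' : EqModXPow N T U) : EqModXPow N S U :=
  fun i hi => (h i hi).trans (h' i hi)

theorem mono {M : ℕ} (h : EqModXPow N S T) (hM : M ≤ N) : EqModXPow M S T :=
  fun i hi => h i (lt_of_lt_of_le hi hM)

theorem succ (h : EqModXPow N S T) (hN : coeffVec N S = coeffVec N T) :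
    EqModXPow (N + 1) S T := by
  intro i hi
  rcases Nat.lt_succ_iff_lt_or_eq.1 hi with hi | rfl
  exacts [h i hi, hN]

theorem X_pow_dvd_sub (h : EqModXPow N S T) (j : ι) : X ^ N ∣ S j - T j :=
  X_pow_dvd_iff.2 fun i hi => by rw [map_sub, sub_eq_zero]; exact congrFun (h i hi) j

end EqModXPow

theorem eq_of_forall_eqModXPow {S T : ι → R⟦X⟧} (h : ∀ N, EqModXPow N S T) : S = T :=
  funext fun j => PowerSeries.ext fun n => congrFun (h (n + 1) n n.lt_succ_self) j

end Contact

section FixedPoint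

variable {R ι : Type*} [CommRing R] [Fintype ι]

theorem Matrix.eq_pow_mulVec_of_succ [DecidableEq ι] {J : Matrix ι ι R} {w : ℕ → ι → R}
    (hw : ∀ u, w (u + 1) = J *ᵥ w u) (u : ℕ) : w u = (J ^ u) *ᵥ w 0 := by
  induction u with
  | zero => rw [pow_zero, Matrix.one_mulVec]
  | succ u ih => rw [hw, ih, Matrix.mulVec_mulVec, ← pow_succ']

theorem Matrix.eq_zero_of_mulVec_eq_self [DecidableEq ι] {J : Matrix ι ι R}
    (hJ : IsNilpotent J) {v : ι → R} (hv : J *ᵥ v = v) : v = 0 := by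
  obtain ⟨N, hN⟩ := hJ
  simpa [hN] using Matrix.eq_pow_mulVec_of_succ (w := fun _ => v) (fun _ => hv.symm) N

structure IsOrderwiseAffine (J : Matrix ι ι R) (F : (ι → R⟦X⟧) → ι → R⟦X⟧) : Prop where
  constantCoeff_eq_zero : ∀ S i, constantCoeff (F S i) = 0
  coeffVec_succ_sub : ∀ {S T : ι → R⟦X⟧} {n : ℕ}, (∀ j, constantCoeff (S j) = 0) →
    (∀ j, constantCoeff (T j) = 0) → EqModXPow (n + 1) S T →
    coeffVec (n + 1) (F S) - coeffVec (n + 1) (F T) =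
      J *ᵥ (coeffVec (n + 1) S - coeffVec (n + 1) T)

namespace IsOrderwiseAffine

variable {J : Matrix ι ι R} {F : (ι → R⟦X⟧) → ι → R⟦X⟧} {S T : ι → R⟦X⟧}

theorem constantCoeff_iterate (hF : IsOrderwiseAffine J F) (t : ℕ) (j : ι) :
    constantCoeff (F^[t] 0 j) = 0 := by
  cases t with
  | zero => simp
  | succ t => rw [Function.iterate_succ_apply']; exact hF.constantCoeff_eq_zero _ j

theorem coeffVec_sub (hF : IsOrderwiseAffine J F) (hS : ∀ j, constantCoeff (S j) = 0)
    (hT : ∀ j, constantCoeff (T j) = 0) {n : ℕ} (h : EqModXPow n S T) :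
    coeffVec n (F S) - coeffVec n (F T) = J *ᵥ (coeffVec n S - coeffVec n T) := by
  cases n with
  | zero =>
    rw [coeffVec_zero_eq_zero hS, coeffVec_zero_eq_zero hT,
      coeffVec_zero_eq_zero (hF.constantCoeff_eq_zero S),
      coeffVec_zero_eq_zero (hF.constantCoeff_eq_zero T), sub_zero, mulVec_zero]
  | succ n => exact hF.coeffVec_succ_sub hS hT h

theorem eqModXPow_map (hF : IsOrderwiseAffine J F) (hS : ∀ j, constantCoeff (S j) = 0)
    (hT : ∀ j, constantCoeff (T j) = 0) {N : ℕ} (h : EqModXPow N S T) :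
    EqModXPow N (F S) (F T) := fun i hi => by
  rw [← sub_eq_zero, hF.coeffVec_sub hS hT (h.mono hi.le), sub_eq_zero.2 (h i hi), mulVec_zero]

theorem eq_of_isFixedPt [DecidableEq ι] (hF : IsOrderwiseAffine J F) (hJ : IsNilpotent J)
    (hS : ∀ j, constantCoeff (S j) = 0) (hT : ∀ j, constantCoeff (T j) = 0)
    (hSF : Function.IsFixedPt F S) (hTF : Function.IsFixedPt F T) : S = T := by
  refine eq_of_forall_eqModXPow fun N => ?_
  induction N with
  | zero => exact .zero
  | succ N ih =>
    refine ih.succ (sub_eq_zero.1 (eq_zero_of_mulVec_eq_self hJ ?_))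
    rw [← hF.coeffVec_sub hS hT ih, hSF.eq, hTF.eq]

theorem eqModXPow_iterate_succ [DecidableEq ι] (hF : IsOrderwiseAffine J F) {N : ℕ}
    (hN : J ^ N = 0) (n : ℕ) :
    ∀ t, N * n ≤ t → EqModXPow n (F^[t + 1] 0) (F^[t] 0) := by
  induction n with
  | zero => exact fun _ _ => .zero
  | succ n ih =>
    intro t ht
    rw [mul_add_one] at ht
    refine (ih t (by omega)).succ ?_
    set w : ℕ → ι → R := fun u =>
      coeffVec n (F^[N * n + u + 1] 0) - coeffVec n (F^[N * n + u] 0)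
    have hw : ∀ u, w (u + 1) = J *ᵥ w u := fun u => by
      have := hF.coeffVec_sub (hF.constantCoeff_iterate _) (hF.constantCoeff_iterate _)
        (ih (N * n + u) (Nat.le_add_right _ _))
      rwa [← Function.iterate_succ_apply' F, ← Function.iterate_succ_apply' F] at this
    obtain ⟨u, rfl⟩ : ∃ u, t = N * n + u := ⟨t - N * n, by omega⟩
    rw [← sub_eq_zero]
    change w u = 0
    rw [eq_pow_mulVec_of_succ hw, pow_eq_zero_of_le (by omega) hN, zero_mulVec]

theorem eqModXPow_iterate [DecidableEq ι] (hF : IsOrderwiseAffine J F) {N : ℕ}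
    (hN : J ^ N = 0) {n t : ℕ} (ht : N * n ≤ t) : EqModXPow n (F^[t] 0) (F^[N * n] 0) := by
  induction t, ht using Nat.le_induction with
  | base => exact fun _ _ => rfl
  | succ t ht ih => exact (hF.eqModXPow_iterate_succ hN n t ht).trans ih

theorem exists_isFixedPt [DecidableEq ι] (hF : IsOrderwiseAffine J F) (hJ : IsNilpotent J) :
    ∃ S, (∀ j, constantCoeff (S j) = 0) ∧ Function.IsFixedPt F S := by
  obtain ⟨N, hN⟩ := hJ
  set S : ι → R⟦X⟧ := fun j => PowerSeries.mk fun n => coeff n (F^[N * (n + 1)] 0 j)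
  have hS : ∀ n, EqModXPow n S (F^[N * n] 0) := fun n i hi => by
    ext j
    rw [coeffVec_apply, coeff_mk]
    exact congrFun ((hF.eqModXPow_iterate hN (Nat.mul_le_mul_left N hi)) i i.lt_succ_self).symm j
  have hS0 : ∀ j, constantCoeff (S j) = 0 := fun j => by
    rw [← coeff_zero_eq_constantCoeff_apply, coeff_mk, coeff_zero_eq_constantCoeff_apply,
      hF.constantCoeff_iterate]
  refine ⟨S, hS0, eq_of_forall_eqModXPow fun n => ?_⟩
  have hstep : EqModXPow n (F S) (F^[N * n + 1] 0) := by
    rw [Function.iterate_succ_apply']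
    exact hF.eqModXPow_map hS0 (hF.constantCoeff_iterate _) (hS n)
  exact hstep.trans ((hF.eqModXPow_iterate_succ hN n _ le_rfl).trans (hS n).symm)

end IsOrderwiseAffine

end FixedPoint

section System

variable {R : Type*} [CommRing R] {m : ℕ}

theorem isOrderwiseAffine_mvSubst (H : Fin m → MvPowerSeries (Fin (m + 1)) R)
    (hH0 : ∀ i, MvPowerSeries.coeff 0 (H i) = 0) :
    IsOrderwiseAffine
      (Matrix.of fun i j : Fin m => MvPowerSeries.coeff (Finsupp.single j.succ 1) (H i))
      (fun S i => mvSubst (H i) (Fin.cons X S)) where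
  constantCoeff_eq_zero S i := by
    rw [← coeff_zero_eq_constantCoeff_apply, coeff_zero_mvSubst, hH0]
  coeffVec_succ_sub {S T n} hS hT h := by
    have hX : ∀ U : Fin m → R⟦X⟧, (∀ j, constantCoeff (U j) = 0) →
        ∀ j, X ∣ (Fin.cons X U : Fin (m + 1) → R⟦X⟧) j :=
      fun U hU j => Fin.cases (dvd_refl X) (fun j => X_dvd_iff.2 (hU j)) j
    have hST : ∀ j, X ^ (n + 1) ∣
        (Fin.cons X S : Fin (m + 1) → R⟦X⟧) j - (Fin.cons X T : Fin (m + 1) → R⟦X⟧) j :=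
      Fin.cases (by simp) fun j => by simpa using h.X_pow_dvd_sub j
    ext i
    rw [Pi.sub_apply, coeffVec_apply, coeffVec_apply,
      coeff_mvSubst_sub_coeff_mvSubst (H i) (hX S hS) (hX T hT) hST, Fin.sum_univ_succ]
    simp [mulVec, dotProduct]

end System

theorem implicit_power_series_theorem_general {R : Type*} [CommRing R] {m : ℕ}
    (H : Fin m → MvPowerSeries (Fin (m + 1)) R)
    (hH0 : ∀ i, MvPowerSeries.coeff 0 (H i) = 0)
    (hJ : IsNilpotent (Matrix.of fun i j : Fin m =>
      MvPowerSeries.coeff (Finsupp.single j.succ 1) (H i))) :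
    ∃! S : Fin m → PowerSeries R,
      (∀ i, PowerSeries.constantCoeff (S i) = 0) ∧
      (∀ i, S i = mvSubst (H i) (Fin.cons PowerSeries.X S)) := by
  have hF := isOrderwiseAffine_mvSubst H hH0
  obtain ⟨S, hS0, hSF⟩ := hF.exists_isFixedPt hJ
  refine ⟨S, ⟨hS0, fun i => (congrFun hSF i).symm⟩, fun T ⟨hT0, hTF⟩ => ?_⟩
  exact hF.eq_of_isFixedPt hJ hT0 hS0 (funext fun i => (hTF i).symm) hSF

/-- **Implicit power series theorem.**  If every `H i` has zero constant coefficient and the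
Jacobian matrix at the origin (the matrix of coefficients of the degree-one monomials `y j`
in `H i`) is nilpotent, the system `Y = H(z, Y)` has exactly one solution consisting of
power series with zero constant coefficients.  Here the variable of index `0` is `z` and the
variable of index `j.succ` is `y j`. -/
theorem implicit_power_series_theorem {R : Type*} [CommRing R] {m : ℕ} (hm : 1 ≤ m)
    (H : Fin m → MvPowerSeries (Fin (m + 1)) R)
    (hH0 : ∀ i, MvPowerSeries.coeff 0 (H i) = 0)
    (hJ : IsNilpotent (Matrix.of fun i j : Fin m =>
      MvPowerSeries.coeff (Finsupp.single j.succ 1) (H i))) :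
    ∃! S : Fin m → PowerSeries R,
      (∀ i, PowerSeries.constantCoeff (S i) = 0) ∧
      (∀ i, S i = mvSubst (H i) (Fin.cons PowerSeries.X S)) :=
  implicit_power_series_theorem_general H hH0 hJ
end

section
/- Contact-improvement lemma: assume every H_i has zero constant coefficient and J₀^p = 0 for some p ≥ 1. Write Φ for the map sending a vector Y of power series in z with zero constant coefficients to (H_1(z,Y),…,H_m(z,Y)) (each component again has zero constant coefficient, so Φ can be iterated). If A and B are two vectors of power series in z with zero constant coefficients such that A_i ≡ B_i mod z^{k+1} for every i, then Φ^p(A)_i ≡ Φ^p(B)_i mod z^{k+2} for every i, where Φ^p denotes the p-fold iterate of Φ. -/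
open PowerSeries

section Divisibility

variable {M : Type*} [CommRing M] {x : M} {c : ℕ}

theorem pow_add_add_dvd_mul_sub_mul {a b a' b' : M} {e f : ℕ} (h : x ^ (c + e) ∣ a - b)
    (h' : x ^ (c + f) ∣ a' - b') (ha' : x ^ f ∣ a') (hb : x ^ e ∣ b) :
    x ^ (c + e + f) ∣ a * a' - b * b' := by
  rw [show a * a' - b * b' = (a - b) * a' + b * (a' - b') by ring]
  exact dvd_add (pow_add x (c + e) f ▸ mul_dvd_mul h ha')
    (by rw [show c + e + f = e + (c + f) by ring, pow_add]; exact mul_dvd_mul hb h')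

theorem pow_add_dvd_pow_sub_pow {s t : M} (hs : x ∣ s) (ht : x ∣ t) (hst : x ^ (c + 1) ∣ s - t)
    (d : ℕ) :
    x ^ (c + d) ∣ s ^ d - t ^ d := by
  induction d with
  | zero => simp
  | succ d ih =>
    rw [pow_succ s, pow_succ t, ← add_assoc]
    exact pow_add_add_dvd_mul_sub_mul ih hst (by rwa [pow_one]) (pow_dvd_pow_of_dvd ht d)

theorem pow_add_sum_dvd_prod_pow_sub_prod_pow {ι : Type*} [DecidableEq ι] {s t : ι → M}
    (hs : ∀ l, x ∣ s l) (ht : ∀ l, x ∣ t l) (hst : ∀ l, x ^ (c + 1) ∣ s l - t l) (d : ι → ℕ)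
    (u : Finset ι) :
    x ^ (c + ∑ l ∈ u, d l) ∣ ∏ l ∈ u, s l ^ d l - ∏ l ∈ u, t l ^ d l := by
  induction u using Finset.induction with
  | empty => simp
  | insert a u ha ih =>
    rw [Finset.prod_insert ha, Finset.prod_insert ha, Finset.sum_insert ha, ← add_assoc]
    refine pow_add_add_dvd_mul_sub_mul (pow_add_dvd_pow_sub_pow (hs a) (ht a) (hst a) (d a)) ih
      ?_ (pow_dvd_pow_of_dvd (ht a) (d a))
    rw [← Finset.prod_pow_eq_pow_sum]
    exact Finset.prod_dvd_prod_of_dvd _ _ fun l _ => pow_dvd_pow_of_dvd (hs l) (d l)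

end Divisibility

section Substitution

variable {R : Type*} [CommRing R] {ι : Type*} [Fintype ι] [DecidableEq ι] {s t : ι → R⟦X⟧}
  {k n : ℕ}

theorem coeff_prod_pow_sub_prod_pow (hs : ∀ l, X ∣ s l) (ht : ∀ l, X ∣ t l)
    (hst : ∀ l, X ^ (k + 1) ∣ s l - t l) (hn : n ≤ k + 1) (d : ι →₀ ℕ) :
    coeff n (∏ l, s l ^ d l - ∏ l, t l ^ d l) =
      ∑ l, if d = Finsupp.single l 1 then coeff n (s l - t l) else 0 := by
  rcases lt_or_ge d.degree 2 with hd | hd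
  · interval_cases hdeg : d.degree
    · obtain rfl := (Finsupp.degree_eq_zero_iff d).mp hdeg
      simp [eq_comm (a := (0 : ι →₀ ℕ))]
    · obtain ⟨a, rfl⟩ : d ∈ Set.range fun a => Finsupp.single a 1 := by
        rw [Finsupp.range_single_one]; exact hdeg
      simp [Finsupp.single_apply, pow_ite, Finsupp.single_left_inj]
  · have hdvd := pow_add_sum_dvd_prod_pow_sub_prod_pow hs ht hst d Finset.univ
    rw [← Finsupp.degree_eq_sum] at hdvd
    rw [X_pow_dvd_iff.mp hdvd n (by omega)]
    refine (Finset.sum_eq_zero fun l _ => if_neg ?_).symm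
    rintro rfl
    simp at hd

theorem coeff_mvSubst_sub {N : ℕ} (H : MvPowerSeries (Fin N) R) {s t : Fin N → R⟦X⟧}
    (hs : ∀ l, X ∣ s l) (ht : ∀ l, X ∣ t l) (hst : ∀ l, X ^ (k + 1) ∣ s l - t l)
    (hn : n ≤ k + 1) :
    coeff n (mvSubst H s - mvSubst H t) =
      ∑ l, MvPowerSeries.coeff (Finsupp.single l 1) H * coeff n (s l - t l) := by
  rw [map_sub, mvSubst, mvSubst, coeff_mk, coeff_mk, ← Finset.sum_sub_distrib]
  simp_rw [← mul_sub, ← map_sub, coeff_prod_pow_sub_prod_pow hs ht hst hn, Finset.mul_sum,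
    mul_ite, mul_zero]
  rw [Finset.sum_comm]
  refine Finset.sum_congr rfl fun l _ => ?_
  rw [Finset.sum_ite_eq']
  split_ifs with hmem
  · rfl
  · obtain rfl : n = 0 := by
      by_contra hn0
      refine hmem (Finset.mem_Iic.mpr fun j => ?_)
      simp only [Finsupp.single_apply, Finsupp.coe_equivFunOnFinite_symm]
      split_ifs <;> omega
    rw [coeff_zero_eq_constantCoeff_apply, X_dvd_iff.mp (dvd_sub (hs l) (ht l)), mul_zero]

theorem X_dvd_mvSubst {N : ℕ} {H : MvPowerSeries (Fin N) R}
    (hH : MvPowerSeries.coeff 0 H = 0) (s : Fin N → R⟦X⟧) : X ∣ mvSubst H s := by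
  rw [X_dvd_iff, ← coeff_zero_eq_constantCoeff_apply, mvSubst, coeff_mk]
  refine Finset.sum_eq_zero fun d hd => ?_
  obtain rfl : d = 0 := by
    ext l
    simpa using Finset.mem_Iic.mp hd l
  rw [hH, zero_mul]

end Substitution

section System

open Matrix

variable {R : Type*} [CommRing R] {m : ℕ} (H : Fin m → MvPowerSeries (Fin (m + 1)) R)

noncomputable def systemMap (Y : Fin m → R⟦X⟧) : Fin m → R⟦X⟧ :=
  fun i => mvSubst (H i) (Fin.cons X Y)

noncomputable def jacobianAtZero : Matrix (Fin m) (Fin m) R :=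
  Matrix.of fun i j => MvPowerSeries.coeff (Finsupp.single j.succ 1) (H i)

variable {Y Y' : Fin m → R⟦X⟧} {k n : ℕ}

theorem X_dvd_systemMap (hH : ∀ i, MvPowerSeries.coeff 0 (H i) = 0) (Y : Fin m → R⟦X⟧)
    (i : Fin m) : X ∣ systemMap H Y i :=
  X_dvd_mvSubst (hH i) _

theorem coeff_systemMap_sub (hY : ∀ j, X ∣ Y j) (hY' : ∀ j, X ∣ Y' j)
    (hYY' : ∀ j, X ^ (k + 1) ∣ Y j - Y' j) (hn : n ≤ k + 1) :
    (fun i => coeff n (systemMap H Y i - systemMap H Y' i)) =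
      jacobianAtZero H *ᵥ fun j => coeff n (Y j - Y' j) := by
  have hcons : ∀ {Z : Fin m → R⟦X⟧}, (∀ j, X ∣ Z j) → ∀ l, X ∣ (Fin.cons X Z : _ → R⟦X⟧) l :=
    fun hZ l => Fin.cases (dvd_refl X) hZ l
  have hcons_sub : ∀ l, X ^ (k + 1) ∣
      (Fin.cons X Y : Fin (m + 1) → R⟦X⟧) l - (Fin.cons X Y' : Fin (m + 1) → R⟦X⟧) l :=
    fun l => Fin.cases (by simp) (fun j => by simpa using hYY' j) l
  ext i
  rw [systemMap, systemMap, coeff_mvSubst_sub (H i) (hcons hY) (hcons hY') hcons_sub hn,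
    Fin.sum_univ_succ]
  simp [mulVec, dotProduct, jacobianAtZero]

theorem X_pow_dvd_systemMap_sub (hY : ∀ j, X ∣ Y j) (hY' : ∀ j, X ∣ Y' j)
    (hYY' : ∀ j, X ^ (k + 1) ∣ Y j - Y' j) (i : Fin m) :
    X ^ (k + 1) ∣ systemMap H Y i - systemMap H Y' i := by
  refine X_pow_dvd_iff.mpr fun n hn => ?_
  have hzero : (fun j => coeff n (Y j - Y' j)) = 0 :=
    funext fun j => X_pow_dvd_iff.mp (hYY' j) n hn
  have hcoeff := congrFun (coeff_systemMap_sub H hY hY' hYY' hn.le) i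
  rw [hzero, mulVec_zero] at hcoeff
  exact hcoeff

theorem coeff_iterate_systemMap_sub (hH : ∀ i, MvPowerSeries.coeff 0 (H i) = 0) (t : ℕ)
    (hY : ∀ j, X ∣ Y j) (hY' : ∀ j, X ∣ Y' j) (hYY' : ∀ j, X ^ (k + 1) ∣ Y j - Y' j)
    (hn : n ≤ k + 1) :
    (fun i => coeff n ((systemMap H)^[t] Y i - (systemMap H)^[t] Y' i)) =
      jacobianAtZero H ^ t *ᵥ fun j => coeff n (Y j - Y' j) := by
  induction t generalizing Y Y' with
  | zero => simp
  | succ t ih =>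
    rw [Function.iterate_succ_apply, Function.iterate_succ_apply,
      ih (X_dvd_systemMap H hH Y) (X_dvd_systemMap H hH Y')
        (X_pow_dvd_systemMap_sub H hY hY' hYY'),
      coeff_systemMap_sub H hY hY' hYY' hn, mulVec_mulVec, pow_succ]

end System

theorem contact_improvement_general {R : Type*} [CommRing R] {m : ℕ}
    (H : Fin m → MvPowerSeries (Fin (m + 1)) R)
    (hH0 : ∀ i, MvPowerSeries.coeff 0 (H i) = 0)
    (p : ℕ)
    (hJp : (Matrix.of fun i j : Fin m =>
      MvPowerSeries.coeff (Finsupp.single j.succ 1) (H i)) ^ p = 0)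
    (Φ : (Fin m → PowerSeries R) → (Fin m → PowerSeries R))
    (hΦ : ∀ Y i, Φ Y i = mvSubst (H i) (Fin.cons PowerSeries.X Y))
    (k : ℕ) (A B : Fin m → PowerSeries R)
    (hA0 : ∀ i, PowerSeries.constantCoeff (A i) = 0)
    (hB0 : ∀ i, PowerSeries.constantCoeff (B i) = 0)
    (hAB : ∀ i, ∀ n ≤ k, PowerSeries.coeff n (A i) = PowerSeries.coeff n (B i)) :
    ∀ i, ∀ n ≤ k + 1, PowerSeries.coeff n (Φ^[p] A i) = PowerSeries.coeff n (Φ^[p] B i) := by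
  obtain rfl : Φ = systemMap H := funext fun Y => funext (hΦ Y)
  have hcontact : ∀ j, X ^ (k + 1) ∣ A j - B j := fun j =>
    X_pow_dvd_iff.mpr fun n hn => by rw [map_sub, hAB j n (Nat.lt_succ_iff.mp hn), sub_self]
  intro i n hn
  have hvanish := coeff_iterate_systemMap_sub H hH0 p (fun j => X_dvd_iff.mpr (hA0 j))
    (fun j => X_dvd_iff.mpr (hB0 j)) hcontact hn
  rw [show jacobianAtZero H ^ p = 0 from hJp, Matrix.zero_mulVec] at hvanish
  rw [← sub_eq_zero, ← map_sub]
  exact congrFun hvanish i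

/-- **Contact-improvement lemma.**  If every `H i` has zero constant coefficient and the
Jacobian matrix at the origin satisfies `J₀ ^ p = 0` for some `p ≥ 1`, and if `Φ` is the map
sending a vector `Y` of power series to `(H 1 (z,Y), …, H m (z,Y))`, then from a contact of
order `k` (coefficients agree in all degrees `n ≤ k`) between `A` and `B`, the `p`-fold
iterates `Φ^[p] A` and `Φ^[p] B` have contact of order `k + 1`. -/
theorem contact_improvement {R : Type*} [CommRing R] {m : ℕ} (hm : 1 ≤ m)
    (H : Fin m → MvPowerSeries (Fin (m + 1)) R)
    (hH0 : ∀ i, MvPowerSeries.coeff 0 (H i) = 0)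
    (p : ℕ) (hp : 1 ≤ p)
    (hJp : (Matrix.of fun i j : Fin m =>
      MvPowerSeries.coeff (Finsupp.single j.succ 1) (H i)) ^ p = 0)
    (Φ : (Fin m → PowerSeries R) → (Fin m → PowerSeries R))
    (hΦ : ∀ Y i, Φ Y i = mvSubst (H i) (Fin.cons PowerSeries.X Y))
    (k : ℕ) (A B : Fin m → PowerSeries R)
    (hA0 : ∀ i, PowerSeries.constantCoeff (A i) = 0)
    (hB0 : ∀ i, PowerSeries.constantCoeff (B i) = 0)
    (hAB : ∀ i, ∀ n ≤ k, PowerSeries.coeff n (A i) = PowerSeries.coeff n (B i)) :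
    ∀ i, ∀ n ≤ k + 1, PowerSeries.coeff n (Φ^[p] A i) = PowerSeries.coeff n (Φ^[p] B i) :=
  contact_improvement_general H hH0 p hJp Φ hΦ k A B hA0 hB0 hAB
end

section
/- Quadratic convergence of Newton's iteration for power series systems: assume every H_i has zero constant coefficient and the Jacobian matrix at the origin J₀ is nilpotent, and let S be the unique solution of Y = H(z,Y) whose components have zero constant coefficients. Let k ≥ 0 and let y be a vector of power series in z with zero constant coefficients such that y_i ≡ S_i mod z^{k+1} for all i. Then the m×m matrix Id − (∂H_i/∂y_j(z,y))_{i,j} of power series in z is invertible over the matrix ring of power series, and the Newton iterate N(y) := y + (Id − (∂H_i/∂y_j(z,y))_{i,j})^{-1}·(H(z,y) − y) satisfies N(y)_i ≡ S_i mod z^{2k+2} for all i. -/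
/-- The formal partial derivative of a multivariate formal power series with respect to the
variable `j`: the coefficient of a monomial `d` is `(d j + 1)` times the coefficient of the
monomial `d + y_j` in `H`. -/
noncomputable def mvPderiv {R : Type*} [CommSemiring R] {k : ℕ} (j : Fin k)
    (H : MvPowerSeries (Fin k) R) : MvPowerSeries (Fin k) R :=
  fun d => ((d j + 1 : ℕ) : R) * MvPowerSeries.coeff (d + Finsupp.single j 1) H

/-!
Write `δ = S - y`, so that `z^(k+1)` divides every `δ_j`. Taylor's formula to first order,
`H(z,S) = H(z,y) + ∂H/∂y(z,y) · δ + O(δ²)`, together with `S = H(z,S)` shows that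
`(Id - ∂H/∂y(z,y)) · δ - (H(z,y) - y)` is divisible by `z^(2k+2)`; applying the inverse matrix,
so is `S - N(y)`. Modulo `z^N` a substitution `H(z,s)` only sees the monomials of `H` with all
exponents below `N`, so Taylor's formula reduces to the polynomial case, where it follows by
induction on the polynomial. The matrix is invertible because its constant term `Id - J₀` is,
`J₀` being nilpotent.
-/

namespace MvPolynomial

variable {R A σ : Type*} [CommRing R] [CommRing A] [Algebra R A]

theorem dvd_aeval_sub_aeval (P : MvPolynomial σ R) {a : A} {s t : σ → A}
    (h : ∀ j, a ∣ s j - t j) : a ∣ aeval s P - aeval t P := by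
  induction P using MvPolynomial.induction_on with
  | C r => simp
  | add p q hp hq =>
    simpa only [map_add, add_sub_add_comm] using dvd_add hp hq
  | mul_X p n hp =>
    have e : aeval s (p * X n) - aeval t (p * X n)
        = (aeval s p - aeval t p) * s n + aeval t p * (s n - t n) := by
      simp only [map_mul, aeval_X]; ring
    rw [e]
    exact dvd_add (hp.mul_right _) ((h n).mul_left _)

theorem sq_dvd_aeval_sub_aeval_sub_sum_pderiv [Fintype σ] (P : MvPolynomial σ R) {a : A}
    {s t : σ → A} (h : ∀ j, a ∣ s j - t j) :
    a ^ 2 ∣ aeval s P - aeval t P - ∑ j, aeval t (pderiv j P) * (s j - t j) := by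
  classical
  induction P using MvPolynomial.induction_on with
  | C r => simp
  | add p q hp hq =>
    simpa only [map_add, add_mul, Finset.sum_add_distrib, add_sub_add_comm] using dvd_add hp hq
  | mul_X p n hp =>
    have hsum : ∑ j, aeval t (pderiv j (p * X n)) * (s j - t j)
        = t n * ∑ j, aeval t (pderiv j p) * (s j - t j) + aeval t p * (s n - t n) := by
      simp [Derivation.leibniz, pderiv_X, Pi.single_apply, add_mul, Finset.sum_add_distrib,
        Finset.mul_sum, mul_assoc, apply_ite, add_comm]
    have e : aeval s (p * X n) - aeval t (p * X n)
          - ∑ j, aeval t (pderiv j (p * X n)) * (s j - t j)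
        = (aeval s p - aeval t p - ∑ j, aeval t (pderiv j p) * (s j - t j)) * t n
          + (aeval s p - aeval t p) * (s n - t n) := by
      rw [hsum]; simp only [map_mul, aeval_X]; ring
    rw [e]
    refine dvd_add (hp.mul_right _) ?_
    rw [pow_two]
    exact mul_dvd_mul (dvd_aeval_sub_aeval p h) (h n)

end MvPolynomial

open PowerSeries

section mvSubst

variable {R : Type*} [CommRing R] {κ : ℕ}

theorem coeff_mvPderiv (j : Fin κ) (G : MvPowerSeries (Fin κ) R) (d : Fin κ →₀ ℕ) :
    MvPowerSeries.coeff d (mvPderiv j G)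
      = ((d j + 1 : ℕ) : R) * MvPowerSeries.coeff (d + Finsupp.single j 1) G :=
  rfl

theorem coeff_mvSubst_eq_coeff_aeval_trunc' (G : MvPowerSeries (Fin κ) R)
    (t : Fin κ → R⟦X⟧) (n : ℕ) :
    coeff n (mvSubst G t) = coeff n (MvPolynomial.aeval t
      (MvPowerSeries.trunc' R (Finsupp.equivFunOnFinite.symm fun _ => n) G)) := by
  simp [mvSubst, MvPowerSeries.trunc', MvPowerSeries.truncFinset, MvPolynomial.aeval_monomial,
    Finsupp.prod_fintype]

theorem X_pow_dvd_aeval {t : Fin κ → R⟦X⟧} (ht : ∀ l, constantCoeff (t l) = 0) {N : ℕ}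
    {P : MvPolynomial (Fin κ) R} (hP : ∀ d : Fin κ →₀ ℕ, (∀ l, d l < N) → P.coeff d = 0) :
    X ^ N ∣ MvPolynomial.aeval t P := by
  rw [MvPolynomial.aeval_def, MvPolynomial.eval₂_eq']
  refine Finset.dvd_sum fun d _ => ?_
  by_cases hd : ∀ l, d l < N
  · simp [hP d hd]
  · obtain ⟨l, hl⟩ := not_forall.mp hd
    have hXt : X ^ N ∣ t l ^ d l :=
      (pow_dvd_pow X (not_lt.mp hl)).trans (pow_dvd_pow_of_dvd (X_dvd_iff.mpr (ht l)) _)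
    exact (hXt.trans (Finset.dvd_prod_of_mem (fun j => t j ^ d j) (Finset.mem_univ l))).mul_left _

theorem X_pow_dvd_mvSubst_sub_aeval {t : Fin κ → R⟦X⟧} (ht : ∀ l, constantCoeff (t l) = 0)
    {N : ℕ} {G : MvPowerSeries (Fin κ) R} {P : MvPolynomial (Fin κ) R}
    (hP : ∀ d : Fin κ →₀ ℕ, (∀ l, d l < N) → P.coeff d = MvPowerSeries.coeff d G) :
    X ^ N ∣ mvSubst G t - MvPolynomial.aeval t P := by
  refine X_pow_dvd_iff.mpr fun p hp => ?_
  rw [map_sub, coeff_mvSubst_eq_coeff_aeval_trunc', ← map_sub, ← map_sub]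
  refine X_pow_dvd_iff.mp (X_pow_dvd_aeval ht fun d hd => ?_) p p.lt_succ_self
  have hdp : d ≤ Finsupp.equivFunOnFinite.symm fun _ => p := fun l => Nat.lt_succ_iff.mp (hd l)
  rw [MvPolynomial.coeff_sub, MvPowerSeries.coeff_trunc', if_pos hdp,
    hP d fun l => (hd l).trans_le hp, sub_self]

theorem X_pow_two_mul_dvd_mvSubst_sub_sub_sum_mvPderiv (G : MvPowerSeries (Fin κ) R)
    {s t : Fin κ → R⟦X⟧} (hs : ∀ l, constantCoeff (s l) = 0)
    (ht : ∀ l, constantCoeff (t l) = 0) {K : ℕ} (h : ∀ j, X ^ K ∣ s j - t j) :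
    X ^ (2 * K) ∣ mvSubst G s - mvSubst G t - ∑ j, mvSubst (mvPderiv j G) t * (s j - t j) := by
  set P := MvPowerSeries.trunc' R (Finsupp.equivFunOnFinite.symm fun _ => 2 * K) G
  have hP : ∀ d : Fin κ →₀ ℕ, (∀ l, d l < 2 * K) → P.coeff d = MvPowerSeries.coeff d G :=
    fun d hd => by
      rw [MvPowerSeries.coeff_trunc', if_pos (show d ≤ _ from fun l => (hd l).le)]
  have hP' (j : Fin κ) (d : Fin κ →₀ ℕ) (hd : ∀ l, d l < 2 * K) :
      (MvPolynomial.pderiv j P).coeff d = MvPowerSeries.coeff d (mvPderiv j G) := by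
    have hdj : d + Finsupp.single j 1 ≤ Finsupp.equivFunOnFinite.symm fun _ => 2 * K := by
      intro l
      have := hd l
      simp only [Finsupp.coe_add, Pi.add_apply, Finsupp.single_apply]
      split_ifs <;> simp <;> omega
    rw [MvPolynomial.coeff_pderiv, MvPowerSeries.coeff_trunc', if_pos hdj, coeff_mvPderiv,
      Nat.cast_succ, mul_comm]
  have e : mvSubst G s - mvSubst G t - ∑ j, mvSubst (mvPderiv j G) t * (s j - t j)
      = (mvSubst G s - MvPolynomial.aeval s P) - (mvSubst G t - MvPolynomial.aeval t P)
        - ∑ j, (mvSubst (mvPderiv j G) t - MvPolynomial.aeval t (MvPolynomial.pderiv j P))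
            * (s j - t j)
        + (MvPolynomial.aeval s P - MvPolynomial.aeval t P
          - ∑ j, MvPolynomial.aeval t (MvPolynomial.pderiv j P) * (s j - t j)) := by
    simp only [sub_mul, Finset.sum_sub_distrib]; ring
  rw [e]
  refine dvd_add (dvd_sub (dvd_sub (X_pow_dvd_mvSubst_sub_aeval hs hP)
    (X_pow_dvd_mvSubst_sub_aeval ht hP))
    (Finset.dvd_sum fun j _ => (X_pow_dvd_mvSubst_sub_aeval ht (hP' j)).mul_right _)) ?_
  rw [pow_mul']
  exact MvPolynomial.sq_dvd_aeval_sub_aeval_sub_sum_pderiv P h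

theorem constantCoeff_mvSubst (G : MvPowerSeries (Fin κ) R) (t : Fin κ → R⟦X⟧) :
    constantCoeff (mvSubst G t) = MvPowerSeries.constantCoeff G := by
  have h0 : (Finsupp.equivFunOnFinite.symm fun _ : Fin κ => 0) = 0 := by ext; simp
  rw [← coeff_zero_eq_constantCoeff_apply, mvSubst, coeff_mk, h0,
    show Finset.Iic (0 : Fin κ →₀ ℕ) = {0} from Finset.Iic_bot]
  simp

theorem constantCoeff_cons_X {m : ℕ} {y : Fin m → R⟦X⟧} (hy : ∀ i, constantCoeff (y i) = 0) :
    ∀ l, constantCoeff ((Fin.cons X y : Fin (m + 1) → R⟦X⟧) l) = 0 :=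
  Fin.cases (by simp) hy

theorem X_pow_two_mul_dvd_mvSubst_cons_sub_sub_sum_mvPderiv {m : ℕ}
    (G : MvPowerSeries (Fin (m + 1)) R) {S y : Fin m → R⟦X⟧}
    (hS : ∀ i, constantCoeff (S i) = 0) (hy : ∀ i, constantCoeff (y i) = 0) {K : ℕ}
    (h : ∀ j, X ^ K ∣ S j - y j) :
    X ^ (2 * K) ∣ mvSubst G (Fin.cons X S) - mvSubst G (Fin.cons X y)
      - ∑ j : Fin m, mvSubst (mvPderiv j.succ G) (Fin.cons X y) * (S j - y j) := by
  have h' : ∀ l, X ^ K ∣ (Fin.cons X S : Fin (m + 1) → R⟦X⟧) l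
      - (Fin.cons X y : Fin (m + 1) → R⟦X⟧) l :=
    Fin.cases (by simp) fun j => by simpa using h j
  simpa [Fin.sum_univ_succ] using X_pow_two_mul_dvd_mvSubst_sub_sub_sum_mvPderiv G
    (constantCoeff_cons_X hS) (constantCoeff_cons_X hy) h'

end mvSubst

theorem Matrix.isUnit_one_sub_of_isNilpotent_map_constantCoeff {R n : Type*} [CommRing R]
    [Fintype n] [DecidableEq n] {M : Matrix n n (PowerSeries R)}
    (hM : IsNilpotent (M.map PowerSeries.constantCoeff)) : IsUnit (1 - M) := by
  rw [Matrix.isUnit_iff_isUnit_det, PowerSeries.isUnit_iff_constantCoeff, RingHom.map_det,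
    RingHom.map_sub, RingHom.map_one, RingHom.mapMatrix_apply, ← Matrix.isUnit_iff_isUnit_det]
  exact hM.isUnit_one_sub

theorem Matrix.sub_add_inverse_mulVec {R n : Type*} [CommRing R] [Fintype n] [DecidableEq n]
    {A : Matrix n n R} (hA : IsUnit A) (x y b : n → R) :
    x - (y + (Ring.inverse A).mulVec b) = (Ring.inverse A).mulVec (A.mulVec (x - y) - b) := by
  rw [Matrix.mulVec_sub, Matrix.mulVec_mulVec, Ring.inverse_mul_cancel _ hA, Matrix.one_mulVec]
  abel

theorem newton_iteration_quadratic_general {R : Type*} [CommRing R] {m : ℕ}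
    (H : Fin m → MvPowerSeries (Fin (m + 1)) R)
    (hJ : IsNilpotent (Matrix.of fun i j : Fin m =>
      MvPowerSeries.coeff (Finsupp.single j.succ 1) (H i)))
    (S : Fin m → PowerSeries R)
    (hS0 : ∀ i, PowerSeries.constantCoeff (S i) = 0)
    (hSfix : ∀ i, S i = mvSubst (H i) (Fin.cons PowerSeries.X S))
    (k : ℕ) (y : Fin m → PowerSeries R)
    (hy0 : ∀ i, PowerSeries.constantCoeff (y i) = 0)
    (hyS : ∀ i, ∀ n ≤ k, PowerSeries.coeff n (y i) = PowerSeries.coeff n (S i)) :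
    IsUnit ((1 : Matrix (Fin m) (Fin m) (PowerSeries R)) -
        Matrix.of fun i j : Fin m => mvSubst (mvPderiv j.succ (H i)) (Fin.cons PowerSeries.X y)) ∧
      ∀ i, ∀ n ≤ 2 * k + 1,
        PowerSeries.coeff n
          ((y + (Ring.inverse ((1 : Matrix (Fin m) (Fin m) (PowerSeries R)) -
              Matrix.of fun i j : Fin m =>
                mvSubst (mvPderiv j.succ (H i)) (Fin.cons PowerSeries.X y))).mulVec
            (fun i => mvSubst (H i) (Fin.cons PowerSeries.X y) - y i)) i) =
          PowerSeries.coeff n (S i) := by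
  set J := Matrix.of fun i j : Fin m => mvSubst (mvPderiv j.succ (H i)) (Fin.cons X y)
  have hunit : IsUnit (1 - J) := by
    refine Matrix.isUnit_one_sub_of_isNilpotent_map_constantCoeff ?_
    convert hJ using 2
    ext i j
    simp [J, constantCoeff_mvSubst, ← MvPowerSeries.coeff_zero_eq_constantCoeff_apply,
      coeff_mvPderiv]
  refine ⟨hunit, fun i n hn => ?_⟩
  have hSy : ∀ j, X ^ (k + 1) ∣ S j - y j := fun j =>
    X_pow_dvd_iff.mpr fun p hp => by rw [map_sub, hyS j p (by omega), sub_self]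
  have hres : ∀ i, X ^ (2 * (k + 1)) ∣
      ((1 - J).mulVec (S - y) - fun i => mvSubst (H i) (Fin.cons X y) - y i) i := by
    intro i
    convert X_pow_two_mul_dvd_mvSubst_cons_sub_sub_sum_mvPderiv (H i) hS0 hy0 hSy using 1
    rw [← hSfix i]
    simp only [Matrix.sub_mulVec, Matrix.one_mulVec, Pi.sub_apply, Matrix.mulVec, dotProduct,
      Matrix.of_apply, J]
    ring
  have herr : X ^ (2 * (k + 1)) ∣ (S - (y + (Ring.inverse (1 - J)).mulVec
      fun i => mvSubst (H i) (Fin.cons X y) - y i)) i := by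
    rw [Matrix.sub_add_inverse_mulVec hunit, Matrix.mulVec, dotProduct]
    exact Finset.dvd_sum fun j _ => (hres j).mul_left _
  have hcoeff := X_pow_dvd_iff.mp herr n (by omega)
  rwa [Pi.sub_apply, map_sub, sub_eq_zero, eq_comm] at hcoeff

/-- **Quadratic convergence of Newton's iteration for power series systems.**  With `H`
having zero constant coefficients and nilpotent Jacobian matrix at the origin, let `S` be the
solution with zero constant coefficients of `Y = H(z,Y)` and let `y` agree with `S` in all
degrees `n ≤ k`.  Then the matrix `Id - (∂H i/∂y j)(z, y)` of power series is invertible,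
and the Newton iterate `y + (Id - ∂H/∂y (z,y))⁻¹ ⬝ (H(z,y) - y)` agrees with `S` in all
degrees `n ≤ 2k + 1`. -/
theorem newton_iteration_quadratic {R : Type*} [CommRing R] {m : ℕ} (hm : 1 ≤ m)
    (H : Fin m → MvPowerSeries (Fin (m + 1)) R)
    (hH0 : ∀ i, MvPowerSeries.coeff 0 (H i) = 0)
    (hJ : IsNilpotent (Matrix.of fun i j : Fin m =>
      MvPowerSeries.coeff (Finsupp.single j.succ 1) (H i)))
    (S : Fin m → PowerSeries R)
    (hS0 : ∀ i, PowerSeries.constantCoeff (S i) = 0)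
    (hSfix : ∀ i, S i = mvSubst (H i) (Fin.cons PowerSeries.X S))
    (k : ℕ) (y : Fin m → PowerSeries R)
    (hy0 : ∀ i, PowerSeries.constantCoeff (y i) = 0)
    (hyS : ∀ i, ∀ n ≤ k, PowerSeries.coeff n (y i) = PowerSeries.coeff n (S i)) :
    IsUnit ((1 : Matrix (Fin m) (Fin m) (PowerSeries R)) -
        Matrix.of fun i j : Fin m => mvSubst (mvPderiv j.succ (H i)) (Fin.cons PowerSeries.X y)) ∧
      ∀ i, ∀ n ≤ 2 * k + 1,
        PowerSeries.coeff n
          ((y + (Ring.inverse ((1 : Matrix (Fin m) (Fin m) (PowerSeries R)) -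
              Matrix.of fun i j : Fin m =>
                mvSubst (mvPderiv j.succ (H i)) (Fin.cons PowerSeries.X y))).mulVec
            (fun i => mvSubst (H i) (Fin.cons PowerSeries.X y) - y i)) i) =
          PowerSeries.coeff n (S i) :=
  newton_iteration_quadratic_general H hJ S hS0 hSfix k y hy0 hyS
end

section
/- Quadratic convergence of the Schulz iteration for matrices of power series: let R be a commutative ring, m ≥ 1, and A an m×m matrix of formal power series in z over R whose matrix of constant coefficients is invertible over R. Then A is invertible as a matrix over the power series ring, and for every k ≥ 0 and every m×m matrix U of power series with U ≡ A^{-1} mod z^{k+1} entrywise, the iterate U + U·(Id − A·U) satisfies U + U·(Id − A·U) ≡ A^{-1} mod z^{2k+2} entrywise. -/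
/-! With `B = A⁻¹` one has `B - (U + U(1 - AU)) = (B - U) A (B - U)` in any ring, so an error
whose entries are divisible by `z^(k+1)` becomes one whose entries are divisible by `z^(2k+2)`.
`A` itself is invertible because its determinant has a unit constant coefficient. -/

open PowerSeries

theorem Matrix.isUnit_iff_isUnit_map_constantCoeff {n R : Type*} [Fintype n] [DecidableEq n]
    [CommRing R] {A : Matrix n n R⟦X⟧} :
    IsUnit A ↔ IsUnit (A.map (constantCoeff : R⟦X⟧ →+* R)) := by
  rw [isUnit_iff_isUnit_det, isUnit_iff_isUnit_det, PowerSeries.isUnit_iff_constantCoeff,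
    RingHom.map_det]
  rfl

theorem schulz_step_error {S : Type*} [Ring S] {A B : S} (hBA : B * A = 1) (hAB : A * B = 1)
    (U : S) : B - (U + U * (1 - A * U)) = (B - U) * A * (B - U) := by
  have hUAB : U * A * B = U := by rw [mul_assoc, hAB, mul_one]
  calc B - (U + U * (1 - A * U)) = B - U * A * B - U + U * A * U := by rw [hUAB]; noncomm_ring
    _ = (B - U) * A * (B - U) := by rw [sub_mul B U A, hBA]; noncomm_ring

theorem Matrix.dvd_mul_apply {l n p α : Type*} [Fintype n] [CommSemiring α] {a b : α}
    {M : Matrix l n α} {N : Matrix n p α} (hM : ∀ i j, a ∣ M i j) (hN : ∀ i j, b ∣ N i j)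
    (i : l) (j : p) :
    a * b ∣ (M * N) i j :=
  Finset.dvd_sum fun t _ => mul_dvd_mul (hM i t) (hN t j)

theorem PowerSeries.X_pow_dvd_sub_iff {R : Type*} [CommRing R] {f g : R⟦X⟧} {N : ℕ} :
    X ^ N ∣ f - g ↔ ∀ n < N, coeff n f = coeff n g := by
  simp only [X_pow_dvd_iff, map_sub, sub_eq_zero]

theorem schulz_iteration_quadratic_general {R : Type*} [CommRing R] {m : ℕ}
    (A : Matrix (Fin m) (Fin m) (PowerSeries R))
    (hA : IsUnit (A.map (PowerSeries.constantCoeff : PowerSeries R →+* R))) (k : ℕ) :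
    IsUnit A ∧
      ∀ U : Matrix (Fin m) (Fin m) (PowerSeries R),
        (∀ i j, ∀ n ≤ k,
          PowerSeries.coeff n (U i j) = PowerSeries.coeff n (Ring.inverse A i j)) →
        ∀ i j, ∀ n ≤ 2 * k + 1,
          PowerSeries.coeff n ((U + U * (1 - A * U)) i j) =
            PowerSeries.coeff n (Ring.inverse A i j) := by
  have hAu : IsUnit A := Matrix.isUnit_iff_isUnit_map_constantCoeff.mpr hA
  refine ⟨hAu, fun U hU i j n hn => ?_⟩
  have hE : ∀ i j, (X : R⟦X⟧) ^ (k + 1) ∣ (Ring.inverse A - U) i j := fun i j =>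
    X_pow_dvd_sub_iff.mpr fun n hn => (hU i j n (Nat.lt_succ_iff.mp hn)).symm
  have hErr := Matrix.dvd_mul_apply (Matrix.dvd_mul_apply (N := A) hE fun _ _ => one_dvd _) hE i j
  rw [← schulz_step_error (Ring.inverse_mul_cancel A hAu) (Ring.mul_inverse_cancel A hAu),
    mul_one, ← pow_add] at hErr
  exact (X_pow_dvd_sub_iff.mp hErr n (by omega)).symm

/-- **Quadratic convergence of the Schulz iteration for matrices of power series.**  If the
matrix of constant coefficients of `A` is invertible over `R`, then `A` is invertible over
the ring of matrices of power series, and any `U` agreeing with `A⁻¹` in all degrees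
`n ≤ k` entrywise yields an iterate `U + U ⬝ (Id - A ⬝ U)` agreeing with `A⁻¹` in all
degrees `n ≤ 2k + 1` entrywise. -/
theorem schulz_iteration_quadratic {R : Type*} [CommRing R] {m : ℕ} (hm : 1 ≤ m)
    (A : Matrix (Fin m) (Fin m) (PowerSeries R))
    (hA : IsUnit (A.map (PowerSeries.constantCoeff : PowerSeries R →+* R))) (k : ℕ) :
    IsUnit A ∧
      ∀ U : Matrix (Fin m) (Fin m) (PowerSeries R),
        (∀ i j, ∀ n ≤ k,
          PowerSeries.coeff n (U i j) = PowerSeries.coeff n (Ring.inverse A i j)) →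
        ∀ i j, ∀ n ≤ 2 * k + 1,
          PowerSeries.coeff n ((U + U * (1 - A * U)) i j) =
            PowerSeries.coeff n (Ring.inverse A i j) :=
  schulz_iteration_quadratic_general A hA k
end

section
/- Truncation bounds for the Pólya exponential (Set) operator: let (y_n)_{n≥0} be nonnegative reals with y_0 = 0 and let 0 < α < 1 be such that ∑_{n≥0} y_n α^n converges. For 0 ≤ β ≤ α write Ỹ(β) := ∑_{n≥0} y_n β^n (these series converge by comparison). Then the series ∑_{i≥1} Ỹ(α^i)/i converges, and for every L ≥ 1, setting s_L := exp(∑_{i=1}^{L−1} Ỹ(α^i)/i), one has s_L ≤ exp(∑_{i=1}^{∞} Ỹ(α^i)/i) ≤ s_L · exp( (Ỹ(α^L)/α^L) · ∑_{i=L}^{∞} α^i/i ). -/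
/-- **Truncation bounds for the Pólya exponential (Set) operator.**  Let `y` be nonnegative
with `y 0 = 0`, `0 < α < 1` with `∑ y_n α^n` summable, and `Ỹ β := ∑' n, y n * β ^ n`.
Then `∑_{i ≥ 1} Ỹ(α^i)/i` converges (indexed below by `i + 1` over `i : ℕ`), and for every
`L ≥ 1`, with `s_L := exp (∑_{i=1}^{L-1} Ỹ(α^i)/i)`, the tail sum `∑_{i ≥ L} α^i / i`
converges and
`s_L ≤ exp (∑_{i ≥ 1} Ỹ(α^i)/i) ≤ s_L * exp ((Ỹ(α^L)/α^L) * ∑_{i ≥ L} α^i / i)`. -/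
theorem polya_set_truncation (y : ℕ → ℝ) (hy : ∀ n, 0 ≤ y n) (hy0 : y 0 = 0)
    (α : ℝ) (hα0 : 0 < α) (hα1 : α < 1)
    (hsum : Summable fun n => y n * α ^ n)
    (Yt : ℝ → ℝ) (hYt : ∀ β, Yt β = ∑' n, y n * β ^ n) :
    Summable (fun i : ℕ => Yt (α ^ (i + 1)) / (i + 1)) ∧
      ∀ L : ℕ, 1 ≤ L →
        Summable (fun i : ℕ => α ^ (L + i) / (L + i)) ∧
        Real.exp (∑ i ∈ Finset.Ico 1 L, Yt (α ^ i) / i) ≤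
          Real.exp (∑' i : ℕ, Yt (α ^ (i + 1)) / (i + 1)) ∧
        Real.exp (∑' i : ℕ, Yt (α ^ (i + 1)) / (i + 1)) ≤
          Real.exp (∑ i ∈ Finset.Ico 1 L, Yt (α ^ i) / i) *
            Real.exp ((Yt (α ^ L) / α ^ L) * ∑' i : ℕ, α ^ (L + i) / (L + i)) := by
  have hα01 : (0:ℝ) ≤ α := hα0.le
  have hsum_pow : ∀ k : ℕ, 1 ≤ k → Summable (fun n => y n * (α ^ k) ^ n) := by
    intro k hk
    refine hsum.of_nonneg_of_le
      (fun n => mul_nonneg (hy n) (pow_nonneg (pow_nonneg hα01 k) n)) (fun n => ?_)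
    refine mul_le_mul_of_nonneg_left (pow_le_pow_left₀ (pow_nonneg hα01 k) ?_ n) (hy n)
    calc α ^ k ≤ α ^ 1 := pow_le_pow_of_le_one hα01 hα1.le hk
    _ = α := pow_one α
  have hYt_nonneg : ∀ k : ℕ, 0 ≤ Yt (α ^ k) := fun k => by
    rw [hYt]
    exact tsum_nonneg fun n => mul_nonneg (hy n) (pow_nonneg (pow_nonneg hα01 k) n)
  have key : ∀ L i : ℕ, 1 ≤ L → L ≤ i → α ^ L * Yt (α ^ i) ≤ α ^ i * Yt (α ^ L) := by
    intro L i hL hLi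
    have h1 : 1 ≤ i := hL.trans hLi
    rw [hYt, hYt, ← tsum_mul_left, ← tsum_mul_left]
    refine Summable.tsum_le_tsum (fun n => ?_) ((hsum_pow i h1).mul_left _) ((hsum_pow L hL).mul_left _)
    rcases n with _ | m
    · simp [hy0]
    · have hexp : i + L * (m + 1) ≤ L + i * (m + 1) := by
        have : L * m ≤ i * m := Nat.mul_le_mul_right m hLi
        nlinarith
      calc α ^ L * (y (m+1) * (α ^ i) ^ (m+1))
          = y (m+1) * α ^ (L + i * (m+1)) := by rw [pow_add, ← pow_mul]; ring
        _ ≤ y (m+1) * α ^ (i + L * (m+1)) :=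
            mul_le_mul_of_nonneg_left (pow_le_pow_of_le_one hα01 hα1.le hexp) (hy _)
        _ = α ^ i * (y (m+1) * (α ^ L) ^ (m+1)) := by rw [pow_add, ← pow_mul]; ring
  have keydiv : ∀ L i : ℕ, 1 ≤ L → L ≤ i →
      Yt (α ^ i) ≤ Yt (α ^ L) / α ^ L * α ^ i := by
    intro L i hL hLi
    rw [div_mul_eq_mul_div, le_div_iff₀ (pow_pos hα0 L)]
    have := key L i hL hLi
    linarith
  set f : ℕ → ℝ := fun i => Yt (α ^ (i + 1)) / (i + 1) with hf_def
  have hf_nonneg : ∀ i, 0 ≤ f i := fun i =>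
    div_nonneg (hYt_nonneg _) (by positivity)
  have hf_le : ∀ i, f i ≤ Yt (α ^ 1) * α ^ i := by
    intro i
    have h := keydiv 1 (i+1) le_rfl (Nat.le_add_left 1 i)
    calc f i ≤ Yt (α ^ (i+1)) := by
          apply div_le_self (hYt_nonneg _)
          have : (0:ℝ) ≤ (i:ℝ) := Nat.cast_nonneg i
          linarith
      _ ≤ Yt (α ^ 1) / α ^ 1 * α ^ (i+1) := h
      _ = Yt (α ^ 1) * α ^ i := by
          rw [pow_one, pow_succ]
          field_simp
  have hf_sum : Summable f :=
    Summable.of_nonneg_of_le hf_nonneg hf_le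
      ((summable_geometric_of_lt_one hα01 hα1).mul_left _)
  refine ⟨hf_sum, fun L hL => ?_⟩
  obtain ⟨M, rfl⟩ : ∃ M, L = M + 1 := ⟨L - 1, (Nat.succ_pred_eq_of_pos hL).symm⟩
  have ht_sum : Summable (fun i : ℕ => α ^ (M + 1 + i) / ((M + 1 + i : ℕ) : ℝ)) := by
    refine Summable.of_nonneg_of_le (fun i => by positivity) (fun i => ?_)
      (((summable_geometric_of_lt_one hα01 hα1).mul_left (α ^ (M+1))))
    rw [pow_add]
    apply div_le_self (by positivity)
    have : (1:ℝ) ≤ ((M + 1 + i : ℕ) : ℝ) := by exact_mod_cast (by omega : 1 ≤ M + 1 + i)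
    exact this
  have hS : ∑ i ∈ Finset.Ico 1 (M+1), Yt (α ^ i) / (i:ℝ) = ∑ i ∈ Finset.range M, f i := by
    rw [Finset.sum_Ico_eq_sum_range]
    simp only [Nat.add_sub_cancel]
    refine Finset.sum_congr rfl fun i _ => ?_
    rw [add_comm 1 i]
    push_cast
    rfl
  have ht_sum' : Summable (fun i : ℕ => α ^ (M + 1 + i) / ((M : ℝ) + 1 + i)) := by
    have : (fun i : ℕ => α ^ (M + 1 + i) / ((M : ℝ) + 1 + i))
        = fun i : ℕ => α ^ (M + 1 + i) / ((M + 1 + i : ℕ) : ℝ) := by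
      funext i; push_cast; ring_nf
    rw [this]; exact ht_sum
  refine ⟨by exact_mod_cast ht_sum', ?_, ?_⟩
  · rw [Real.exp_le_exp, hS]
    exact Summable.sum_le_tsum _ (fun i _ => hf_nonneg i) hf_sum
  · rw [← Real.exp_add, Real.exp_le_exp, hS, ← Summable.sum_add_tsum_nat_add M hf_sum]
    have htail : ∑' i, f (i + M) ≤
        (Yt (α ^ (M+1)) / α ^ (M+1)) * ∑' i : ℕ, α ^ (M + 1 + i) / ((M + 1 + i : ℕ) : ℝ) := by
      rw [← tsum_mul_left]
      refine Summable.tsum_le_tsum (fun i => ?_) ((summable_nat_add_iff M).mpr hf_sum)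
        (ht_sum.mul_left _)
      have hk : Yt (α ^ (i + M + 1)) ≤ Yt (α ^ (M+1)) / α ^ (M+1) * α ^ (i + M + 1) :=
        keydiv (M+1) (i + M + 1) (Nat.le_add_left 1 M) (by omega)
      have hpos : (0:ℝ) < ((i + M : ℕ) : ℝ) + 1 := by positivity
      have hstep : f (i + M) ≤
          (Yt (α ^ (M+1)) / α ^ (M+1) * α ^ (i + M + 1)) / (((i + M : ℕ):ℝ) + 1) := by
        simp only [hf_def]
        exact div_le_div_of_nonneg_right hk hpos.le
      refine hstep.trans ?_
      have he : (i + M + 1 : ℕ) = (M + 1 + i : ℕ) := by omega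
      rw [he, mul_div_assoc]
      have hc : (((i + M : ℕ):ℝ) + 1) = ((M + 1 + i : ℕ) : ℝ) := by push_cast; ring
      rw [hc]
    have hconv : ∑' i : ℕ, α ^ (M + 1 + i) / ((M + 1 + i : ℕ) : ℝ)
        = ∑' i : ℕ, α ^ (M + 1 + i) / ((M : ℝ) + 1 + i) := by
      congr 1; funext i; push_cast; ring_nf
    calc ∑ i ∈ Finset.range M, f i + ∑' i, f (i + M)
        ≤ ∑ i ∈ Finset.range M, f i +
          (Yt (α ^ (M+1)) / α ^ (M+1)) * ∑' i : ℕ, α ^ (M + 1 + i) / ((M + 1 + i : ℕ) : ℝ) := by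
          linarith
      _ = _ := by rw [hconv]; push_cast; ring
end

section
/- The ordinary generating series of cycles equals that of nonempty sequences: for every real x with 0 ≤ x < 1, the series ∑_{k=1}^{∞} (φ(k)/k)·log(1/(1 − x^k)) converges and its sum equals x/(1 − x), where φ denotes Euler's totient function. -/
/-!
Expanding `log (1 / (1 - x ^ d)) = ∑_{n ≥ 1} x ^ (d n) / n` turns the series into a double sum of
nonnegative terms over pairs `(d, n)` of positive integers. Grouping the pairs by `m = d n`, the
terms with product `m` add up to `(∑_{d ∣ m} φ d) x ^ m / m = x ^ m`, so the double sum is the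
geometric series `∑_{m ≥ 1} x ^ m = x / (1 - x)`.
-/

open Finset

theorem hasSum_pnat_prod_of_hasSum_sum_divisorsAntidiagonal {f : ℕ → ℕ → ℝ}
    (hf : ∀ a b, 0 ≤ f a b) {s : ℝ}
    (h : HasSum (fun n : ℕ+ => ∑ p ∈ (n : ℕ).divisorsAntidiagonal, f p.1 p.2) s) :
    HasSum (fun c : ℕ+ × ℕ+ => f c.1 c.2) s := by
  rw [← sigmaAntidiagonalEquivProd.hasSum_iff]
  have hfiber (n : ℕ+) := (n : ℕ).divisorsAntidiagonal.hasSum fun p => f p.1 p.2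
  exact h.sigma_of_hasSum hfiber ((summable_sigma_of_nonneg fun _ => hf _ _).2
    ⟨fun n => (hfiber n).summable, h.summable.congr fun n => (hfiber n).tsum_eq.symm⟩)

theorem sum_divisorsAntidiagonal_totient_div_mul_pow_div {K : Type*} [Field K] [CharZero K]
    (x : K) {n : ℕ} (hn : n ≠ 0) :
    ∑ p ∈ n.divisorsAntidiagonal, (p.1.totient : K) / p.1 * (x ^ (p.1 * p.2) / p.2) = x ^ n := by
  have hterm : ∀ p ∈ n.divisorsAntidiagonal,
      (p.1.totient : K) / p.1 * (x ^ (p.1 * p.2) / p.2) = p.1.totient * (x ^ n / n) := by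
    intro p hp
    obtain ⟨hmul, -⟩ := Nat.mem_divisorsAntidiagonal.1 hp
    have h1 : (p.1 : K) ≠ 0 := by exact_mod_cast left_ne_zero_of_mul (hmul ▸ hn)
    have h2 : (p.2 : K) ≠ 0 := by exact_mod_cast right_ne_zero_of_mul (hmul ▸ hn)
    rw [hmul, ← hmul, Nat.cast_mul]
    field_simp
  rw [sum_congr rfl hterm, ← sum_mul, Nat.sum_divisorsAntidiagonal (fun a _ => (a.totient : K)),
    ← Nat.cast_sum, Nat.sum_totient]
  field_simp [(Nat.cast_ne_zero.2 hn : (n : K) ≠ 0)]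

theorem Real.hasSum_pnat_pow_div_log_of_abs_lt_one {y : ℝ} (hy : |y| < 1) :
    HasSum (fun n : ℕ+ => y ^ (n : ℕ) / n) (Real.log (1 / (1 - y))) := by
  rw [one_div, Real.log_inv, hasSum_pnat_iff_hasSum_succ (f := fun n : ℕ => y ^ n / n)]
  exact_mod_cast Real.hasSum_pow_div_log_of_abs_lt_one hy

theorem hasSum_pnat_geometric_of_lt_one {x : ℝ} (hx0 : 0 ≤ x) (hx1 : x < 1) :
    HasSum (fun n : ℕ+ => x ^ (n : ℕ)) (x / (1 - x)) := by
  rw [hasSum_pnat_iff_hasSum_succ (f := fun n : ℕ => x ^ n), div_eq_mul_inv]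
  simpa only [pow_succ'] using (hasSum_geometric_of_lt_one hx0 hx1).mul_left x

/-- **The ordinary generating series of cycles equals that of nonempty sequences:**
for `0 ≤ x < 1`, the series `∑_{k ≥ 1} (φ(k)/k) log (1/(1 - x^k))` converges (indexed
below by `k + 1` over `k : ℕ`, `φ` being Euler's totient function) and its sum is
`x/(1 - x)`. -/
theorem cycle_ogs_eq_seq_ogs (x : ℝ) (hx0 : 0 ≤ x) (hx1 : x < 1) :
    Summable (fun k : ℕ =>
      ((Nat.totient (k + 1) : ℝ) / (k + 1)) * Real.log (1 / (1 - x ^ (k + 1)))) ∧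
    (∑' k : ℕ, ((Nat.totient (k + 1) : ℝ) / (k + 1)) * Real.log (1 / (1 - x ^ (k + 1)))) =
      x / (1 - x) := by
  set f : ℕ → ℕ → ℝ := fun d n => (d.totient : ℝ) / d * (x ^ (d * n) / n)
  have hrow (d : ℕ+) : HasSum (fun n : ℕ+ => f d n)
      ((d : ℕ).totient / d * Real.log (1 / (1 - x ^ (d : ℕ)))) := by
    have hxd : |x ^ (d : ℕ)| < 1 := by
      rw [abs_of_nonneg (by positivity)]
      exact pow_lt_one₀ hx0 hx1 d.ne_zero
    simpa only [f, pow_mul] using (Real.hasSum_pnat_pow_div_log_of_abs_lt_one hxd).mul_left _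
  have hpairs : HasSum (fun c : ℕ+ × ℕ+ => f c.1 c.2) (x / (1 - x)) := by
    refine hasSum_pnat_prod_of_hasSum_sum_divisorsAntidiagonal (fun d n => by positivity) ?_
    simpa only [f, sum_divisorsAntidiagonal_totient_div_mul_pow_div x (PNat.ne_zero _)]
      using hasSum_pnat_geometric_of_lt_one hx0 hx1
  have hsum := hpairs.prod_fiberwise hrow
  rw [hasSum_pnat_iff_hasSum_succ
    (f := fun k : ℕ => (k.totient : ℝ) / k * Real.log (1 / (1 - x ^ k)))] at hsum
  push_cast at hsum
  exact ⟨hsum.summable, hsum.tsum_eq⟩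
end

section
/- Numerical convergence of the fixed-point iteration: let h : ℕ×ℕ → ℝ with h(i,j) ≥ 0 for all i, j, h(0,0) = 0 and h(0,1) = 0, and let S(z) = ∑_n s_n z^n be the unique formal power series with s_0 = 0 satisfying S = H(z,S), where H(z,y) = ∑_{i,j} h(i,j) z^i y^j (the coefficients s_n are then nonnegative). Let α ≥ 0 and assume there exists r > α such that ∑_n s_n r^n converges. Then the sequence of reals defined by y_0 = 0 and y_{p+1} = ∑_{i,j} h(i,j) α^i y_p^j is well defined — for every p the family (h(i,j)·α^i·y_p^j)_{(i,j)} is summable — and converges to S(α) := ∑_n s_n α^n. -/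
/-- The two-variable formal power series `H(z,y) = ∑ h(i,j) z^i y^j` attached to a
coefficient family `h : ℕ × ℕ → ℝ`; the variable `0` is `z` and the variable `1` is `y`. -/
noncomputable def toMv (h : ℕ × ℕ → ℝ) : MvPowerSeries (Fin 2) ℝ :=
  fun d => h (d 0, d 1)

/-!
Positivity makes every series absolutely convergent, so we evaluate in `ℝ≥0∞`. There
`E(F) = ∑ F_n α^n` (`evalENNReal`) is multiplicative on series with nonnegative coefficients,
hence `E(H(z,F)) = Ψ(E(F))` with `Ψ(t) = ∑ h(i,j) α^i t^j` (`evalENNReal₂ h α`), and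
`L = S(α)` is a finite fixed point of the monotone map `Ψ`; the iterates `y_p` therefore stay
below `L`. Because `h(0,1) = 0`, the `n`-th coefficient of `H(z,F)` only depends on the
coefficients of `F` below `n`, so the truncations `S_p` of `S` below degree `p` satisfy
`S_{p+1}(α) ≤ Ψ(S_p(α))`. By induction `S_p(α) ≤ y_p ≤ S(α)`, and `S_p(α) → S(α)`.
-/

open PowerSeries Finset Filter Topology
open scoped ENNReal

theorem ENNReal.tsum_mul_tsum_eq_tsum_sum_antidiagonal {A : Type*} [AddMonoid A]
    [HasAntidiagonal A] (f g : A → ℝ≥0∞) :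
    (∑' n, f n) * ∑' n, g n = ∑' n, ∑ kl ∈ antidiagonal n, f kl.1 * g kl.2 := by
  calc (∑' n, f n) * ∑' n, g n = ∑' kl : A × A, f kl.1 * g kl.2 := by
        rw [ENNReal.tsum_prod (f := fun k l => f k * g l), ← ENNReal.tsum_mul_right]
        exact tsum_congr fun k => ENNReal.tsum_mul_left.symm
    _ = ∑' n, ∑ kl ∈ antidiagonal n, f kl.1 * g kl.2 := by
        rw [← HasAntidiagonal.sigmaAntidiagonalEquivProd.tsum_eq, ENNReal.tsum_sigma']
        exact tsum_congr fun n => Finset.tsum_subtype (antidiagonal n) fun kl => f kl.1 * g kl.2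

noncomputable def evalENNReal₂ (h : ℕ × ℕ → ℝ) (x t : ℝ≥0∞) : ℝ≥0∞ :=
  ∑' q, ENNReal.ofReal (h q) * x ^ q.1 * t ^ q.2

theorem evalENNReal₂_mono (h : ℕ × ℕ → ℝ) (x : ℝ≥0∞) : Monotone (evalENNReal₂ h x) :=
  fun _ _ hst => ENNReal.tsum_le_tsum fun _ => by gcongr

theorem summable_of_tsum_ofReal_ne_top {ι : Type*} {f : ι → ℝ} (hf : ∀ i, 0 ≤ f i)
    (hfin : ∑' i, ENNReal.ofReal (f i) ≠ ∞) : Summable f :=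
  (ENNReal.summable_toReal hfin).congr fun i => ENNReal.toReal_ofReal (hf i)

namespace PowerSeries

section NonnegCoeffs

variable (R : Type*) [CommSemiring R] [PartialOrder R] [IsOrderedRing R]

def nonnegCoeffs : Subsemiring R⟦X⟧ where
  carrier := {f | ∀ n, 0 ≤ coeff n f}
  mul_mem' {f g} hf hg n := by
    rw [coeff_mul]
    exact sum_nonneg fun p _ => mul_nonneg (hf p.1) (hg p.2)
  one_mem' n := by
    rw [coeff_one]
    split_ifs
    exacts [zero_le_one, le_rfl]
  add_mem' hf hg n := by
    rw [map_add]
    exact add_nonneg (hf n) (hg n)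
  zero_mem' n := by simp

variable {R}

theorem X_mem_nonnegCoeffs : X ∈ nonnegCoeffs R := fun n => by
  rw [coeff_X]
  split_ifs
  exacts [zero_le_one, le_rfl]

theorem trunc_mem_nonnegCoeffs {f : R⟦X⟧} (hf : f ∈ nonnegCoeffs R) (k : ℕ) :
    (trunc k f : R⟦X⟧) ∈ nonnegCoeffs R := fun n => by
  rw [Polynomial.coeff_coe, coeff_trunc]
  split_ifs
  exacts [hf n, le_rfl]

end NonnegCoeffs

section Divisibility

variable {R : Type*} [CommRing R]

theorem X_dvd_trunc {f : R⟦X⟧} (hf : X ∣ f) (k : ℕ) : X ∣ (trunc k f : R⟦X⟧) := by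
  rw [X_dvd_iff, ← coeff_zero_eq_constantCoeff_apply, Polynomial.coeff_coe, coeff_trunc]
  split_ifs
  exacts [by rwa [coeff_zero_eq_constantCoeff_apply, ← X_dvd_iff], rfl]

theorem X_pow_dvd_sub_trunc (f : R⟦X⟧) (k : ℕ) : X ^ k ∣ f - (trunc k f : R⟦X⟧) :=
  X_pow_dvd_iff.mpr fun m hm => by
    rw [map_sub, Polynomial.coeff_coe, coeff_trunc, if_pos hm, sub_self]

theorem X_pow_add_dvd_X_pow_mul_pow {f : R⟦X⟧} (hf : X ∣ f) (i j : ℕ) :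
    X ^ (i + j) ∣ X ^ i * f ^ j := by
  rw [pow_add]
  exact mul_dvd_mul_left _ (pow_dvd_pow_of_dvd hf j)

theorem X_pow_succ_dvd_X_pow_mul_pow_sub {f g : R⟦X⟧} (hf : X ∣ f) (hg : X ∣ g) {k : ℕ}
    (hfg : X ^ k ∣ f - g) {i j : ℕ} (hij : (i, j) ≠ (0, 1)) :
    X ^ (k + 1) ∣ X ^ i * f ^ j - X ^ i * g ^ j := by
  rcases Nat.eq_zero_or_pos j with rfl | hj
  · simp
  obtain ⟨f', rfl⟩ := hf
  obtain ⟨g', rfl⟩ := hg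
  obtain ⟨c, hc⟩ := sub_dvd_pow_sub_pow f' g' j
  obtain ⟨m, hm⟩ : ∃ m, i + j = m + 2 := ⟨i + j - 2, by grind⟩
  have hfactor :
      X ^ i * (X * f') ^ j - X ^ i * (X * g') ^ j = X ^ (m + 1) * (X * f' - X * g') * c := by
    rw [mul_pow, mul_pow, ← mul_assoc, ← mul_assoc, ← pow_add, ← mul_sub, hc, hm]
    ring
  rw [hfactor, pow_succ']
  exact (mul_dvd_mul (dvd_pow_self X m.succ_ne_zero) hfg).mul_right c

end Divisibility

section Evaluation

noncomputable def evalENNReal (f : ℝ⟦X⟧) (x : ℝ≥0∞) : ℝ≥0∞ :=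
  ∑' n, ENNReal.ofReal (coeff n f) * x ^ n

theorem evalENNReal_X (x : ℝ≥0∞) : evalENNReal X x = x := by
  rw [evalENNReal, tsum_eq_single 1 fun n hn => by simp [coeff_X, hn]]
  simp

theorem evalENNReal_mul {f g : ℝ⟦X⟧} (hf : f ∈ nonnegCoeffs ℝ) (hg : g ∈ nonnegCoeffs ℝ)
    (x : ℝ≥0∞) : evalENNReal (f * g) x = evalENNReal f x * evalENNReal g x := by
  rw [evalENNReal, evalENNReal, evalENNReal, ENNReal.tsum_mul_tsum_eq_tsum_sum_antidiagonal]
  refine tsum_congr fun n => ?_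
  rw [coeff_mul, ENNReal.ofReal_sum_of_nonneg fun p _ => mul_nonneg (hf p.1) (hg p.2), sum_mul]
  refine sum_congr rfl fun p hp => ?_
  rw [ENNReal.ofReal_mul (hf p.1), ← mem_antidiagonal.mp hp, pow_add]
  ring

theorem evalENNReal_pow {f : ℝ⟦X⟧} (hf : f ∈ nonnegCoeffs ℝ) (x : ℝ≥0∞) (j : ℕ) :
    evalENNReal (f ^ j) x = evalENNReal f x ^ j := by
  induction j with
  | zero =>
    rw [pow_zero, pow_zero, evalENNReal, tsum_eq_single 0 fun n hn => by simp [coeff_one, hn]]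
    simp
  | succ j ih => rw [pow_succ, evalENNReal_mul (pow_mem hf j) hf, ih, pow_succ]

theorem tendsto_evalENNReal_trunc (f : ℝ⟦X⟧) (x : ℝ≥0∞) :
    Tendsto (fun k => evalENNReal (trunc k f) x) atTop (𝓝 (evalENNReal f x)) := by
  have hpartial (k : ℕ) :
      evalENNReal (trunc k f) x = ∑ n ∈ range k, ENNReal.ofReal (coeff n f) * x ^ n := by
    rw [evalENNReal, tsum_eq_sum fun n hn => by
      rw [Polynomial.coeff_coe, coeff_trunc, if_neg (mt mem_range.mpr hn), ENNReal.ofReal_zero,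
        zero_mul]]
    exact sum_congr rfl fun n hn => by
      rw [Polynomial.coeff_coe, coeff_trunc, if_pos (mem_range.mp hn)]
  rw [funext hpartial]
  exact ENNReal.tendsto_nat_tsum _

end Evaluation

theorem coeff_mvSubst_toMv (h : ℕ × ℕ → ℝ) (f : ℝ⟦X⟧) (n : ℕ) :
    coeff n (mvSubst (toMv h) ![X, f]) =
      ∑ q ∈ range (n + 1) ×ˢ range (n + 1), h q * coeff n (X ^ q.1 * f ^ q.2) := by
  rw [mvSubst, coeff_mk]
  refine sum_equiv (finTwoArrowEquiv' ℕ) (fun d => ?_) (fun d _ => ?_)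
  · simp [Finsupp.le_def, Fin.forall_fin_two]
  · rw [Fin.prod_univ_two]
    rfl

section Substitution

variable {h : ℕ × ℕ → ℝ}

theorem mvSubst_toMv_mem_nonnegCoeffs (hpos : ∀ q, 0 ≤ h q) {f : ℝ⟦X⟧}
    (hf : f ∈ nonnegCoeffs ℝ) : mvSubst (toMv h) ![X, f] ∈ nonnegCoeffs ℝ := fun n => by
  rw [coeff_mvSubst_toMv]
  exact sum_nonneg fun q _ =>
    mul_nonneg (hpos q) (mul_mem (pow_mem X_mem_nonnegCoeffs _) (pow_mem hf _) n)

theorem coeff_mvSubst_toMv_congr (h01 : h (0, 1) = 0) {f g : ℝ⟦X⟧} (hf : X ∣ f) (hg : X ∣ g)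
    {k : ℕ} (hfg : X ^ k ∣ f - g) {n : ℕ} (hn : n ≤ k) :
    coeff n (mvSubst (toMv h) ![X, f]) = coeff n (mvSubst (toMv h) ![X, g]) := by
  rw [coeff_mvSubst_toMv, coeff_mvSubst_toMv]
  refine sum_congr rfl fun q _ => ?_
  by_cases hq : q = (0, 1)
  · simp [hq, h01]
  · rw [← sub_eq_zero, ← mul_sub, ← map_sub,
      X_pow_dvd_iff.mp (X_pow_succ_dvd_X_pow_mul_pow_sub hf hg hfg hq) n (by omega), mul_zero]

theorem mem_nonnegCoeffs_of_eq_mvSubst (hpos : ∀ q, 0 ≤ h q) (h01 : h (0, 1) = 0) {f : ℝ⟦X⟧}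
    (hf : X ∣ f) (hfix : f = mvSubst (toMv h) ![X, f]) : f ∈ nonnegCoeffs ℝ := by
  intro n
  induction n using Nat.strong_induction_on with
  | _ n ih =>
  have htrunc : (trunc n f : ℝ⟦X⟧) ∈ nonnegCoeffs ℝ := fun m => by
    rw [Polynomial.coeff_coe, coeff_trunc]
    split_ifs with hm
    exacts [ih m hm, le_rfl]
  rw [hfix, coeff_mvSubst_toMv_congr h01 hf (X_dvd_trunc hf n) (X_pow_dvd_sub_trunc f n) le_rfl]
  exact mvSubst_toMv_mem_nonnegCoeffs hpos htrunc n

theorem evalENNReal_mvSubst_toMv (hpos : ∀ q, 0 ≤ h q) {f : ℝ⟦X⟧} (hf : f ∈ nonnegCoeffs ℝ)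
    (hX : X ∣ f) (x : ℝ≥0∞) :
    evalENNReal (mvSubst (toMv h) ![X, f]) x = evalENNReal₂ h x (evalENNReal f x) := by
  have hmonomial (q : ℕ × ℕ) : X ^ q.1 * f ^ q.2 ∈ nonnegCoeffs ℝ :=
    mul_mem (pow_mem X_mem_nonnegCoeffs _) (pow_mem hf _)
  have hcoeff (n : ℕ) : ENNReal.ofReal (coeff n (mvSubst (toMv h) ![X, f])) =
      ∑' q, ENNReal.ofReal (h q) * ENNReal.ofReal (coeff n (X ^ q.1 * f ^ q.2)) := by
    rw [coeff_mvSubst_toMv,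
      ENNReal.ofReal_sum_of_nonneg fun q _ => mul_nonneg (hpos q) (hmonomial q n),
      tsum_eq_sum fun q hq => ?_]
    · exact sum_congr rfl fun q _ => ENNReal.ofReal_mul (hpos q)
    · have hlt : n < q.1 + q.2 := by simp only [mem_product, mem_range, not_and_or] at hq; omega
      rw [X_pow_dvd_iff.mp (X_pow_add_dvd_X_pow_mul_pow hX q.1 q.2) n hlt]
      simp
  calc evalENNReal (mvSubst (toMv h) ![X, f]) x
      = ∑' n, ∑' q,
          ENNReal.ofReal (h q) * (ENNReal.ofReal (coeff n (X ^ q.1 * f ^ q.2)) * x ^ n) := by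
        simp only [evalENNReal, hcoeff, ← ENNReal.tsum_mul_right, mul_assoc]
    _ = ∑' q, ENNReal.ofReal (h q) * evalENNReal (X ^ q.1 * f ^ q.2) x := by
        rw [ENNReal.tsum_comm]
        simp only [evalENNReal, ENNReal.tsum_mul_left]
    _ = evalENNReal₂ h x (evalENNReal f x) := by
        simp only [evalENNReal₂, evalENNReal_mul (pow_mem X_mem_nonnegCoeffs _) (pow_mem hf _),
          evalENNReal_pow X_mem_nonnegCoeffs, evalENNReal_pow hf, evalENNReal_X, mul_assoc]

theorem evalENNReal_trunc_succ_le (hpos : ∀ q, 0 ≤ h q) (h01 : h (0, 1) = 0) {f : ℝ⟦X⟧}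
    (hX : X ∣ f) (hfix : f = mvSubst (toMv h) ![X, f]) (x : ℝ≥0∞) (k : ℕ) :
    evalENNReal (trunc (k + 1) f) x ≤ evalENNReal₂ h x (evalENNReal (trunc k f) x) := by
  have hf := mem_nonnegCoeffs_of_eq_mvSubst hpos h01 hX hfix
  rw [← evalENNReal_mvSubst_toMv hpos (trunc_mem_nonnegCoeffs hf k) (X_dvd_trunc hX k)]
  refine ENNReal.tsum_le_tsum fun n => mul_le_mul_left (ENNReal.ofReal_le_ofReal ?_) _
  rw [Polynomial.coeff_coe, coeff_trunc]
  split_ifs with hn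
  · exact ((congrArg (coeff n) hfix).trans (coeff_mvSubst_toMv_congr h01 hX (X_dvd_trunc hX k)
      (X_pow_dvd_sub_trunc f k) (by omega))).le
  · exact mvSubst_toMv_mem_nonnegCoeffs hpos (trunc_mem_nonnegCoeffs hf k) n

end Substitution

end PowerSeries

section RealIteration

variable {h : ℕ × ℕ → ℝ} {α : ℝ}

theorem summable_and_ofReal_tsum_eq_evalENNReal₂ (hpos : ∀ q, 0 ≤ h q) (hα : 0 ≤ α) {t : ℝ}
    (ht : 0 ≤ t) (hfin : evalENNReal₂ h (ENNReal.ofReal α) (ENNReal.ofReal t) ≠ ∞) :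
    Summable (fun q : ℕ × ℕ => h q * α ^ q.1 * t ^ q.2) ∧
      ENNReal.ofReal (∑' q : ℕ × ℕ, h q * α ^ q.1 * t ^ q.2) =
        evalENNReal₂ h (ENNReal.ofReal α) (ENNReal.ofReal t) := by
  have hnonneg (q : ℕ × ℕ) : 0 ≤ h q * α ^ q.1 * t ^ q.2 := by
    have := hpos q
    positivity
  have hterm : ∑' q : ℕ × ℕ, ENNReal.ofReal (h q * α ^ q.1 * t ^ q.2) =
      evalENNReal₂ h (ENNReal.ofReal α) (ENNReal.ofReal t) :=
    tsum_congr fun q => by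
      rw [ENNReal.ofReal_mul' (pow_nonneg ht _), ENNReal.ofReal_mul (hpos q),
        ENNReal.ofReal_pow hα, ENNReal.ofReal_pow ht]
  have hsum := summable_of_tsum_ofReal_ne_top hnonneg (hterm ▸ hfin)
  exact ⟨hsum, (ENNReal.ofReal_tsum_of_nonneg hnonneg hsum).trans hterm⟩

theorem tendsto_of_iterate_evalENNReal₂ (hpos : ∀ q, 0 ≤ h q) (hα : 0 ≤ α) {L : ℝ≥0∞}
    (hL : L ≠ ∞) (hLfix : evalENNReal₂ h (ENNReal.ofReal α) L = L) {l : ℕ → ℝ≥0∞}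
    (hl0 : l 0 = 0) (hl : ∀ p, l (p + 1) ≤ evalENNReal₂ h (ENNReal.ofReal α) (l p))
    (hlL : Tendsto l atTop (𝓝 L)) {y : ℕ → ℝ} (hy0 : y 0 = 0)
    (hyrec : ∀ p, y (p + 1) = ∑' q : ℕ × ℕ, h q * α ^ q.1 * y p ^ q.2) :
    (∀ p, Summable fun q : ℕ × ℕ => h q * α ^ q.1 * y p ^ q.2) ∧
      Tendsto y atTop (𝓝 L.toReal) := by
  have hstep {t : ℝ} (ht : 0 ≤ t) (htL : ENNReal.ofReal t ≤ L) :=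
    summable_and_ofReal_tsum_eq_evalENNReal₂ hpos hα ht
      (ne_top_of_le_ne_top (by rwa [hLfix]) (evalENNReal₂_mono h _ htL))
  have hbound (p : ℕ) : 0 ≤ y p ∧ ENNReal.ofReal (y p) ≤ L := by
    induction p with
    | zero => simp [hy0]
    | succ p ih =>
      rw [hyrec p, (hstep ih.1 ih.2).2, ← hLfix]
      exact ⟨tsum_nonneg fun q => by have := hpos q; have := ih.1; positivity,
        evalENNReal₂_mono h _ ih.2⟩
  have hlower (p : ℕ) : l p ≤ ENNReal.ofReal (y p) := by
    induction p with
    | zero => simp [hl0]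
    | succ p ih =>
      rw [hyrec p, (hstep (hbound p).1 (hbound p).2).2]
      exact (hl p).trans (evalENNReal₂_mono h _ ih)
  refine ⟨fun p => (hstep (hbound p).1 (hbound p).2).1, ?_⟩
  have hlim : Tendsto (fun p => ENNReal.ofReal (y p)) atTop (𝓝 L) :=
    tendsto_of_tendsto_of_tendsto_of_le_of_le hlL tendsto_const_nhds hlower fun p => (hbound p).2
  exact ((ENNReal.tendsto_toReal hL).comp hlim).congr fun p => ENNReal.toReal_ofReal (hbound p).1

end RealIteration

theorem fixed_point_numerical_convergence_general (h : ℕ × ℕ → ℝ) (hpos : ∀ p, 0 ≤ h p)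
    (h01 : h (0, 1) = 0)
    (s : ℕ → ℝ) (hs0 : s 0 = 0)
    (hfix : PowerSeries.mk s = mvSubst (toMv h) ![PowerSeries.X, PowerSeries.mk s])
    (α : ℝ) (hα : 0 ≤ α)
    (hr : ∃ r : ℝ, α < r ∧ Summable fun n : ℕ => s n * r ^ n)
    (y : ℕ → ℝ) (hy0 : y 0 = 0)
    (hyrec : ∀ p : ℕ, y (p + 1) = ∑' q : ℕ × ℕ, h q * α ^ q.1 * y p ^ q.2) :
    (∀ p : ℕ, Summable fun q : ℕ × ℕ => h q * α ^ q.1 * y p ^ q.2) ∧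
      Filter.Tendsto y Filter.atTop (nhds (∑' n : ℕ, s n * α ^ n)) := by
  obtain ⟨r, hαr, hsum_r⟩ := hr
  have hX : X ∣ mk s := X_dvd_iff.mpr (by simpa using hs0)
  have hs := mem_nonnegCoeffs_of_eq_mvSubst hpos h01 hX hfix
  have hs_nonneg (n : ℕ) : 0 ≤ s n := by simpa using hs n
  have hterm_nonneg (n : ℕ) : 0 ≤ s n * α ^ n := mul_nonneg (hs_nonneg n) (pow_nonneg hα n)
  have hsum : Summable fun n => s n * α ^ n :=
    hsum_r.of_nonneg_of_le hterm_nonneg fun n =>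
      mul_le_mul_of_nonneg_left (pow_le_pow_left₀ hα hαr.le n) (hs_nonneg n)
  have hL : evalENNReal (mk s) (ENNReal.ofReal α) = ENNReal.ofReal (∑' n, s n * α ^ n) := by
    rw [ENNReal.ofReal_tsum_of_nonneg hterm_nonneg hsum]
    exact tsum_congr fun n => by
      rw [coeff_mk, ENNReal.ofReal_mul (hs_nonneg n), ENNReal.ofReal_pow hα]
  have hLfix : evalENNReal₂ h (ENNReal.ofReal α) (evalENNReal (mk s) (ENNReal.ofReal α)) =
      evalENNReal (mk s) (ENNReal.ofReal α) := by
    rw [← evalENNReal_mvSubst_toMv hpos hs hX, ← hfix]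
  have := tendsto_of_iterate_evalENNReal₂ hpos hα (hL ▸ ENNReal.ofReal_ne_top) hLfix
    (by simp [evalENNReal]) (evalENNReal_trunc_succ_le hpos h01 hX hfix _)
    (tendsto_evalENNReal_trunc _ _) hy0 hyrec
  rwa [hL, ENNReal.toReal_ofReal (tsum_nonneg hterm_nonneg)] at this

/-- **Numerical convergence of the fixed-point iteration.**  Let `h ≥ 0` with `h(0,0) = 0`,
`h(0,1) = 0`, `S = ∑ s_n z^n` the formal power series solution with `s 0 = 0` of
`S = H(z,S)`, `α ≥ 0`, and assume `∑ s_n r^n` converges for some `r > α`.  Then the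
iteration `y 0 = 0`, `y (p+1) = ∑_{i,j} h(i,j) α^i (y p)^j` is well defined (each family
is summable) and converges to `S(α) = ∑ s_n α^n`. -/
theorem fixed_point_numerical_convergence (h : ℕ × ℕ → ℝ) (hpos : ∀ p, 0 ≤ h p)
    (h00 : h (0, 0) = 0) (h01 : h (0, 1) = 0)
    (s : ℕ → ℝ) (hs0 : s 0 = 0)
    (hfix : PowerSeries.mk s = mvSubst (toMv h) ![PowerSeries.X, PowerSeries.mk s])
    (α : ℝ) (hα : 0 ≤ α)
    (hr : ∃ r : ℝ, α < r ∧ Summable fun n : ℕ => s n * r ^ n)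
    (y : ℕ → ℝ) (hy0 : y 0 = 0)
    (hyrec : ∀ p : ℕ, y (p + 1) = ∑' q : ℕ × ℕ, h q * α ^ q.1 * y p ^ q.2) :
    (∀ p : ℕ, Summable fun q : ℕ × ℕ => h q * α ^ q.1 * y p ^ q.2) ∧
      Filter.Tendsto y Filter.atTop (nhds (∑' n : ℕ, s n * α ^ n)) :=
  fixed_point_numerical_convergence_general h hpos h01 s hs0 hfix α hα hr y hy0 hyrec
end

section
/- Formal existence and uniqueness for first-order differential equations (power-series counterpart of the Leroux–Viennot theorem): let R be a commutative ring which is a ℚ-algebra and let G be a formal power series in the two variables z, y over R. Then there exists exactly one formal power series S in z over R with zero constant coefficient whose formal derivative satisfies S′ = G(z, S). -/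
open PowerSeries

theorem coeff_mvSubst_eq_of_X_pow_dvd_sub {R : Type*} [CommRing R] {k : ℕ}
    (H : MvPowerSeries (Fin k) R) {s t : Fin k → R⟦X⟧} {n : ℕ}
    (hst : ∀ j, X ^ (n + 1) ∣ s j - t j) :
    coeff n (mvSubst H s) = coeff n (mvSubst H t) := by
  have hmk : ∀ j, Ideal.Quotient.mk (Ideal.span {X ^ (n + 1)}) (s j) =
      Ideal.Quotient.mk (Ideal.span {X ^ (n + 1)}) (t j) := fun j =>
    Ideal.Quotient.eq.mpr (Ideal.mem_span_singleton.mpr (hst j))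
  simp only [mvSubst, coeff_mk]
  refine Finset.sum_congr rfl fun d _ => congrArg _ ?_
  have hprod : X ^ (n + 1) ∣ ∏ j, s j ^ d j - ∏ j, t j ^ d j := by
    rw [← Ideal.mem_span_singleton, ← Ideal.Quotient.eq]
    simp only [map_prod, map_pow, hmk]
  rw [← sub_eq_zero, ← map_sub]
  exact X_pow_dvd_iff.mp hprod n n.lt_succ_self

namespace PowerSeries

def IsCausal {R : Type*} [CommSemiring R] (Φ : R⟦X⟧ → R⟦X⟧) : Prop :=
  ∀ n S T, (∀ i ≤ n, coeff i S = coeff i T) → coeff n (Φ S) = coeff n (Φ T)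

theorem coeff_derivative_eq_iff {R : Type*} [CommSemiring R] [Algebra ℚ R] (S : R⟦X⟧) (n : ℕ)
    (y : R) : coeff n (d⁄dX R S) = y ↔ coeff (n + 1) S = (n + 1 : ℚ)⁻¹ • y := by
  have hn : (n + 1 : ℚ) ≠ 0 := by positivity
  rw [eq_inv_smul_iff₀ hn, coeff_derivative, Algebra.smul_def, mul_comm]
  simp

section Ode

variable {R : Type*} [CommSemiring R] [Algebra ℚ R] {Φ : R⟦X⟧ → R⟦X⟧}

variable (Φ) in
/-- The right-hand side is evaluated at the truncation of the solution at degree `n`, which makes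
the recursion well-founded; for causal `Φ` the truncation is harmless. -/
noncomputable def odeSolCoeff : ℕ → R
  | 0 => 0
  | n + 1 => (n + 1 : ℚ)⁻¹ •
      coeff n (Φ (mk fun i => if i ≤ n then odeSolCoeff i else 0))

theorem IsCausal.odeSolCoeff_succ (hΦ : IsCausal Φ) (n : ℕ) :
    odeSolCoeff Φ (n + 1) = (n + 1 : ℚ)⁻¹ • coeff n (Φ (mk (odeSolCoeff Φ))) := by
  rw [odeSolCoeff, hΦ n _ (mk (odeSolCoeff Φ)) fun i hi => by simp [hi]]

theorem IsCausal.derivative_mk_odeSolCoeff (hΦ : IsCausal Φ) :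
    d⁄dX R (mk (odeSolCoeff Φ)) = Φ (mk (odeSolCoeff Φ)) := by
  ext n
  rw [coeff_derivative_eq_iff, coeff_mk, hΦ.odeSolCoeff_succ]

theorem IsCausal.eq_of_derivative_eq (hΦ : IsCausal Φ) {S T : R⟦X⟧}
    (hS₀ : constantCoeff S = 0) (hS : d⁄dX R S = Φ S)
    (hT₀ : constantCoeff T = 0) (hT : d⁄dX R T = Φ T) : S = T := by
  ext n
  induction n using Nat.strong_induction_on with
  | _ n ih =>
    cases n with
    | zero => simp [hS₀, hT₀]
    | succ n =>
      rw [(coeff_derivative_eq_iff S n _).mp (congrArg (coeff n) hS),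
        (coeff_derivative_eq_iff T n _).mp (congrArg (coeff n) hT),
        hΦ n S T fun i hi => ih i (by omega)]

theorem IsCausal.existsUnique_derivative_eq (hΦ : IsCausal Φ) :
    ∃! S : R⟦X⟧, constantCoeff S = 0 ∧ d⁄dX R S = Φ S :=
  ⟨mk (odeSolCoeff Φ), ⟨by simp [odeSolCoeff], hΦ.derivative_mk_odeSolCoeff⟩,
    fun _ ⟨hT₀, hT⟩ => hΦ.eq_of_derivative_eq hT₀ hT (by simp [odeSolCoeff])
      hΦ.derivative_mk_odeSolCoeff⟩

end Ode

end PowerSeries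

theorem isCausal_mvSubst_X {R : Type*} [CommRing R] (G : MvPowerSeries (Fin 2) R) :
    IsCausal fun S => mvSubst G ![X, S] := by
  intro n S T hST
  refine coeff_mvSubst_eq_of_X_pow_dvd_sub G fun j => ?_
  fin_cases j
  · simp
  · simp only [Fin.mk_one, Matrix.cons_val_one, Matrix.cons_val_fin_one, X_pow_dvd_iff, map_sub]
    intro i hi
    rw [hST i (by omega), sub_self]

/-- **Formal existence and uniqueness for first-order differential equations** (power-series
counterpart of the Leroux–Viennot theorem).  Over a commutative `ℚ`-algebra `R`, for any
two-variable formal power series `G` (variables indexed by `Fin 2`, `0` being `z` and `1`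
being `y`), there is exactly one formal power series `S` in `z` with zero constant
coefficient satisfying `S' = G(z, S)`. -/
theorem formal_ode_existence_uniqueness {R : Type*} [CommRing R] [Algebra ℚ R]
    (G : MvPowerSeries (Fin 2) R) :
    ∃! S : PowerSeries R, PowerSeries.constantCoeff S = 0 ∧
      PowerSeries.derivativeFun S = mvSubst G ![PowerSeries.X, S] :=
  (isCausal_mvSubst_X G).existsUnique_derivative_eq
end

section
/- Newton step for the homogeneous linear differential system: let R be a commutative ring which is a ℚ-algebra, m ≥ 1 and k ≥ 0. Let A, M, W be m×m matrices of formal power series in z over R such that the constant-coefficient matrix of M is the identity, M′ = A·M, and W ≡ M mod z^{k+1} entrywise (so W is invertible over the matrix ring of power series). Let V be the m×m matrix of power series with zero constant coefficients satisfying V′ = W^{-1}·(A·W − W′). Then W + W·V ≡ M mod z^{2k+2} entrywise. -/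
/-!
Let `D = W + W·V - M`. Using `W·W⁻¹ = 1` one computes `D' = A·D + E·V`, where
`E = W' - A·W` is the residual of `W` in the equation. Since `E = (W - M)' - A·(W - M)` and
`W ≡ M mod z^(k+1)`, `E ≡ 0 mod z^k`; then `V' = -W⁻¹·E` and `V(0) = 0` give
`V ≡ 0 mod z^(k+1)`, so the forcing term `E·V` vanishes mod `z^(2k+1)`. As `D(0) = 0`,
integrating `D' = A·D + E·V` one coefficient at a time (which needs division by positive
integers) gives `D ≡ 0 mod z^(2k+2)`.
-/

open PowerSeries

namespace Matrix

variable {ι κ ν : Type*} [Fintype κ]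

theorem dvd_mul_apply_of_forall_dvd {S : Type*} [CommSemiring S] {a b : S}
    {P : Matrix ι κ S} {Q : Matrix κ ν S} (hP : ∀ i l, a ∣ P i l)
    (hQ : ∀ l j, b ∣ Q l j) (i : ι) (j : ν) : a * b ∣ (P * Q) i j :=
  Finset.dvd_sum fun l _ => mul_dvd_mul (hP i l) (hQ l j)

theorem dvd_mul_apply_of_forall_dvd_right {S : Type*} [CommSemiring S] {b : S}
    (P : Matrix ι κ S) {Q : Matrix κ ν S} (hQ : ∀ l j, b ∣ Q l j) (i : ι) (j : ν) :
    b ∣ (P * Q) i j := by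
  simpa using dvd_mul_apply_of_forall_dvd (a := 1) (fun _ _ => one_dvd _) hQ i j

theorem isUnit_of_isUnit_map_constantCoeff {R : Type*} [CommRing R] [DecidableEq κ]
    {W : Matrix κ κ R⟦X⟧} (hW : IsUnit (W.map constantCoeff)) : IsUnit W := by
  rw [isUnit_iff_isUnit_det, isUnit_iff_constantCoeff, RingHom.map_det]
  exact (isUnit_iff_isUnit_det _).mp hW

end Matrix

namespace Derivation

variable {R S : Type*} [CommSemiring R] [CommSemiring S] [Algebra R S] (D : Derivation R S S)
  {ι κ ν : Type*} [Fintype κ]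

theorem matrix_map_mul (P : Matrix ι κ S) (Q : Matrix κ ν S) :
    (P * Q).map D = P.map D * Q + P * Q.map D := by
  ext i j
  simp only [Matrix.map_apply, Matrix.add_apply, Matrix.mul_apply, map_sum, leibniz,
    smul_eq_mul, ← Finset.sum_add_distrib]
  exact Finset.sum_congr rfl fun _ _ => by ring

end Derivation

namespace PowerSeries

variable {R : Type*}

theorem X_pow_dvd_derivative [CommSemiring R] {n : ℕ} {f : R⟦X⟧} (hf : X ^ (n + 1) ∣ f) :
    X ^ n ∣ d⁄dX R f := by
  rw [X_pow_dvd_iff] at hf ⊢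
  intro m hm
  rw [coeff_derivative, hf (m + 1) (by omega), zero_mul]

theorem X_pow_succ_dvd_of_derivative [CommSemiring R] [IsAddTorsionFree R] {n : ℕ} {f : R⟦X⟧}
    (hf0 : constantCoeff f = 0) (hf : X ^ n ∣ d⁄dX R f) : X ^ (n + 1) ∣ f := by
  rw [X_pow_dvd_iff] at hf ⊢
  rintro (_ | m) hm
  · rwa [coeff_zero_eq_constantCoeff_apply]
  · have h := hf m (by omega)
    rw [coeff_derivative, mul_comm, ← Nat.cast_succ, ← nsmul_eq_mul] at h
    exact nsmul_right_injective m.succ_ne_zero (h.trans (smul_zero _).symm)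

variable [CommRing R] {ι : Type*} [Fintype ι]

theorem X_pow_succ_dvd_of_map_derivative_eq_mul_add [IsAddTorsionFree R] {ν : Type*}
    {A : Matrix ι ι R⟦X⟧} {D F : Matrix ι ν R⟦X⟧} {N : ℕ}
    (hD : D.map (d⁄dX R) = A * D + F) (hD0 : ∀ i j, constantCoeff (D i j) = 0)
    (hF : ∀ i j, X ^ N ∣ F i j) (i : ι) (j : ν) : X ^ (N + 1) ∣ D i j := by
  suffices h : ∀ n ≤ N + 1, ∀ i j, X ^ n ∣ D i j from h _ le_rfl i j
  intro n
  induction n with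
  | zero => simp
  | succ n ih =>
    intro hn i j
    have hDn := ih (by omega)
    refine X_pow_succ_dvd_of_derivative (hD0 i j) ?_
    rw [← Matrix.map_apply (f := d⁄dX R), hD, Matrix.add_apply]
    exact dvd_add (Matrix.dvd_mul_apply_of_forall_dvd_right A hDn i j)
      ((pow_dvd_pow X (by omega)).trans (hF i j))

theorem X_pow_dvd_map_derivative_sub_mul {κ : Type*} {A : Matrix ι ι R⟦X⟧}
    {M W : Matrix ι κ R⟦X⟧} {k : ℕ}
    (hM : M.map (d⁄dX R) = A * M) (hWM : ∀ i j, X ^ (k + 1) ∣ (W - M) i j) (i : ι) (j : κ) :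
    X ^ k ∣ (W.map (d⁄dX R) - A * W) i j := by
  have hE : W.map (d⁄dX R) - A * W = (W - M).map (d⁄dX R) - A * (W - M) := by
    rw [Matrix.map_sub _ (map_sub _), hM, Matrix.mul_sub]
    abel
  rw [hE, Matrix.sub_apply]
  exact dvd_sub (X_pow_dvd_derivative (hWM i j))
    ((pow_dvd_pow X k.le_succ).trans (Matrix.dvd_mul_apply_of_forall_dvd_right A hWM i j))

theorem map_derivative_newton_error [DecidableEq ι] {A M W V : Matrix ι ι R⟦X⟧}
    (hW : IsUnit W) (hM : M.map (d⁄dX R) = A * M)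
    (hV : V.map (d⁄dX R) = Ring.inverse W * (A * W - W.map (d⁄dX R))) :
    (W + W * V - M).map (d⁄dX R) =
      A * (W + W * V - M) + (W.map (d⁄dX R) - A * W) * V := by
  rw [Matrix.map_sub _ (map_sub _), Matrix.map_add _ (map_add _), Derivation.matrix_map_mul, hM,
    hV, Ring.mul_inverse_cancel_left _ _ hW]
  noncomm_ring

end PowerSeries

theorem newton_step_homogeneous_system_general {R : Type*} [CommRing R] [Algebra ℚ R]
    {m : ℕ} (k : ℕ)
    (A M W : Matrix (Fin m) (Fin m) (PowerSeries R))
    (hM0 : M.map (PowerSeries.constantCoeff (R := R)) = 1)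
    (hM' : ∀ i j, PowerSeries.derivativeFun (M i j) = (A * M) i j)
    (hWM : ∀ i j, ∀ n ≤ k, PowerSeries.coeff n (W i j) = PowerSeries.coeff n (M i j))
    (V : Matrix (Fin m) (Fin m) (PowerSeries R))
    (hV0 : ∀ i j, PowerSeries.constantCoeff (V i j) = 0)
    (hV' : ∀ i j, PowerSeries.derivativeFun (V i j) =
      (Ring.inverse W *
        (A * W - Matrix.of fun a b => PowerSeries.derivativeFun (W a b))) i j) :
    IsUnit W ∧
      ∀ i j, ∀ n < 2 * k + 2,
        PowerSeries.coeff n ((W + W * V) i j) = PowerSeries.coeff n (M i j) := by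
  have := IsAddTorsionFree.of_module_rat (M := R)
  have hM : M.map (d⁄dX R) = A * M := Matrix.ext hM'
  have hV : V.map (d⁄dX R) = Ring.inverse W * (A * W - W.map (d⁄dX R)) := Matrix.ext hV'
  have hWM' : ∀ i j, X ^ (k + 1) ∣ (W - M) i j := fun i j =>
    X_pow_dvd_iff.mpr fun n hn => by
      rw [Matrix.sub_apply, map_sub, hWM i j n (by omega), sub_self]
  have hW0 : ∀ i j, constantCoeff (W i j) = constantCoeff (M i j) := fun i j => by
    simpa only [coeff_zero_eq_constantCoeff_apply] using hWM i j 0 k.zero_le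
  have hW : IsUnit W := by
    refine Matrix.isUnit_of_isUnit_map_constantCoeff ?_
    rw [show W.map constantCoeff = M.map constantCoeff from Matrix.ext hW0, hM0]
    exact isUnit_one
  have hE := X_pow_dvd_map_derivative_sub_mul hM hWM'
  have hVk : ∀ i j, X ^ (k + 1) ∣ V i j := fun i j => by
    refine X_pow_succ_dvd_of_derivative (hV0 i j) ?_
    rw [← Matrix.map_apply (f := d⁄dX R), hV, ← neg_sub, Matrix.mul_neg, Matrix.neg_apply,
      dvd_neg]
    exact Matrix.dvd_mul_apply_of_forall_dvd_right _ hE i j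
  have hD0 : ∀ i j, constantCoeff ((W + W * V - M) i j) = 0 := fun i j => by
    simp [Matrix.mul_apply, hV0, hW0]
  have hD := X_pow_succ_dvd_of_map_derivative_eq_mul_add (N := k + (k + 1))
    (map_derivative_newton_error hW hM hV) hD0
    (fun i j => pow_add (X : R⟦X⟧) k (k + 1) ▸ Matrix.dvd_mul_apply_of_forall_dvd hE hVk i j)
  refine ⟨hW, fun i j n hn => ?_⟩
  have := X_pow_dvd_iff.mp (hD i j) n (by omega)
  rwa [Matrix.sub_apply, map_sub, sub_eq_zero] at this

/-- **Newton step for the homogeneous linear differential system.**  Over a commutative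
`ℚ`-algebra `R`, let `M' = A·M` with the constant-coefficient matrix of `M` equal to the
identity, and let `W ≡ M mod z^(k+1)` entrywise (so `W` is invertible over the matrix
ring of power series).  If `V` is the matrix of power series with zero constant
coefficients such that `V' = W⁻¹·(A·W - W')`, then `W + W·V ≡ M mod z^(2k+2)`
entrywise. -/
theorem newton_step_homogeneous_system {R : Type*} [CommRing R] [Algebra ℚ R]
    {m : ℕ} (hm : 1 ≤ m) (k : ℕ)
    (A M W : Matrix (Fin m) (Fin m) (PowerSeries R))
    (hM0 : M.map (PowerSeries.constantCoeff (R := R)) = 1)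
    (hM' : ∀ i j, PowerSeries.derivativeFun (M i j) = (A * M) i j)
    (hWM : ∀ i j, ∀ n ≤ k, PowerSeries.coeff n (W i j) = PowerSeries.coeff n (M i j))
    (V : Matrix (Fin m) (Fin m) (PowerSeries R))
    (hV0 : ∀ i j, PowerSeries.constantCoeff (V i j) = 0)
    (hV' : ∀ i j, PowerSeries.derivativeFun (V i j) =
      (Ring.inverse W *
        (A * W - Matrix.of fun a b => PowerSeries.derivativeFun (W a b))) i j) :
    IsUnit W ∧
      ∀ i j, ∀ n < 2 * k + 2,
        PowerSeries.coeff n ((W + W * V) i j) = PowerSeries.coeff n (M i j) :=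
  newton_step_homogeneous_system_general k A M W hM0 hM' hWM V hV0 hV'
end
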